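/- arXiv:1408.3755 — 12 statements merged into one kernel-verified Lean document; each statement's English description precedes it below -/
import Mathlib

section
/- Let r_1,…,r_N ≥ 0, a > 0, ϱ > 0. Define s̄_1 = Σ_{i=1}^N i^a r_i and s̄_2 = Σ_{i=1}^N i^{a+ϱ} r_i. If ϱ ≥ 1, then Σ_{i=1}^N r_i ≥ s̄_1^{(a+ϱ)/ϱ} / s̄_2^{a/ϱ} (with the convention 0/0 = 0). -/
/-!
Weighted Hölder with exponent `p = (a + ϱ) / a`, applied to the values `i ^ a` and the weights
`r i`, gives `s̄₁ ≤ (∑ r i) ^ (ϱ / (a + ϱ)) * s̄₂ ^ (a / (a + ϱ))`; raising to the power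
`(a + ϱ) / ϱ` and dividing by `s̄₂ ^ (a / ϱ)` is the claim; for `s̄₂ = 0` the right-hand side
is `x / 0 = 0`, so the multiplied-out form suffices.
-/

open Finset Real

theorem Real.inner_le_weight_mul_Lp_of_nonneg_on {ι : Type*} (s : Finset ι) {p : ℝ} (hp : 1 ≤ p)
    (w f : ι → ℝ) (hw : ∀ i ∈ s, 0 ≤ w i) (hf : ∀ i ∈ s, 0 ≤ f i) :
    ∑ i ∈ s, w i * f i ≤ (∑ i ∈ s, w i) ^ (1 - p⁻¹) * (∑ i ∈ s, w i * f i ^ p) ^ p⁻¹ := by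
  simpa only [univ_eq_attach, sum_attach s (fun i => w i * f i), sum_attach s w,
    sum_attach s (fun i => w i * f i ^ p)] using
    inner_le_weight_mul_Lp_of_nonneg univ hp (fun i : s => w i) (fun i : s => f i)
      (fun i => hw i i.2) (fun i => hf i i.2)

theorem Real.sum_rpow_mul_rpow_le_sum_mul_sum_rpow_mul_rpow {ι : Type*} (s : Finset ι)
    (f w : ι → ℝ) (hf : ∀ i ∈ s, 0 ≤ f i) (hw : ∀ i ∈ s, 0 ≤ w i) {a ϱ : ℝ}
    (ha : 0 < a) (hϱ : 0 < ϱ) :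
    (∑ i ∈ s, f i ^ a * w i) ^ ((a + ϱ) / ϱ)
      ≤ (∑ i ∈ s, w i) * (∑ i ∈ s, f i ^ (a + ϱ) * w i) ^ (a / ϱ) := by
  have hW : 0 ≤ ∑ i ∈ s, w i := sum_nonneg hw
  have hM : 0 ≤ ∑ i ∈ s, f i ^ (a + ϱ) * w i :=
    sum_nonneg fun i hi => mul_nonneg (rpow_nonneg (hf i hi) _) (hw i hi)
  have hp : 1 ≤ (a + ϱ) / a := by rw [le_div_iff₀ ha]; linarith
  have holder := inner_le_weight_mul_Lp_of_nonneg_on s hp w (fun i => f i ^ a) hw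
    fun i hi => rpow_nonneg (hf i hi) a
  have hpow : ∀ i ∈ s, w i * (f i ^ a) ^ ((a + ϱ) / a) = f i ^ (a + ϱ) * w i := fun i hi => by
    rw [← rpow_mul (hf i hi), mul_div_cancel₀ _ ha.ne', mul_comm]
  rw [sum_congr rfl hpow, inv_div, one_sub_div (by positivity), add_sub_cancel_left] at holder
  calc (∑ i ∈ s, f i ^ a * w i) ^ ((a + ϱ) / ϱ)
      ≤ ((∑ i ∈ s, w i) ^ (ϱ / (a + ϱ)) * (∑ i ∈ s, f i ^ (a + ϱ) * w i) ^ (a / (a + ϱ)))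
          ^ ((a + ϱ) / ϱ) := by
        refine rpow_le_rpow (sum_nonneg fun i hi => ?_) ?_ (by positivity)
        · exact mul_nonneg (rpow_nonneg (hf i hi) a) (hw i hi)
        · simpa only [mul_comm (w _)] using holder
    _ = (∑ i ∈ s, w i) * (∑ i ∈ s, f i ^ (a + ϱ) * w i) ^ (a / ϱ) := by
        rw [mul_rpow (rpow_nonneg hW _) (rpow_nonneg hM _), ← rpow_mul hW, ← rpow_mul hM,
          div_mul_div_cancel₀ (by positivity), div_self hϱ.ne', rpow_one,
          div_mul_div_cancel₀ (by positivity)]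

theorem frolov_cor1 (N : ℕ) (r : ℕ → ℝ) (a ϱ : ℝ)
    (hr : ∀ i ∈ Finset.Icc 1 N, 0 ≤ r i)
    (ha : 0 < a) (hϱ : 1 ≤ ϱ) :
    ∑ i ∈ Finset.Icc 1 N, r i
      ≥ (∑ i ∈ Finset.Icc 1 N, (i : ℝ) ^ a * r i) ^ ((a + ϱ) / ϱ)
        / (∑ i ∈ Finset.Icc 1 N, (i : ℝ) ^ (a + ϱ) * r i) ^ (a / ϱ) := by
  have hs₂ : 0 ≤ ∑ i ∈ Icc 1 N, (i : ℝ) ^ (a + ϱ) * r i :=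
    sum_nonneg fun i hi => mul_nonneg (rpow_nonneg i.cast_nonneg _) (hr i hi)
  exact div_le_of_le_mul₀ (rpow_nonneg hs₂ _) (sum_nonneg hr)
    (sum_rpow_mul_rpow_le_sum_mul_sum_rpow_mul_rpow _ _ r (fun i _ => i.cast_nonneg) hr ha
      (by linarith))
end

section
/- Let r_1,…,r_N ≥ 0. Define s_1 = Σ_{i=1}^N i·r_i, s_2 = Σ_{i=1}^N i²·r_i, and suppose s_1 > 0. Let δ = s_2/s_1 and θ = δ − ⌊δ⌋. Then Σ_{i=1}^N r_i ≥ θ·s_1²/(s_2 + (1−θ)s_1) + (1−θ)·s_1²/(s_2 − θ·s_1), and the right-hand side is at least s_1²/s_2. -/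
/-!
Write `M = ⌊δ⌋`, so that `s₂ = (M + θ) s₁` with `M ≥ 1` (as `s₁ ≤ s₂`). Since `(i - M)(i - M - 1) ≥ 0`
for every integer `i`, summing against the weights `r i` gives
`M (M + 1) ∑ r ≥ (2M + 1) s₁ - s₂ = (M + 1 - θ) s₁`, and the middle expression of the claim is exactly
`(M + 1 - θ) s₁ / (M (M + 1))`, the total mass of the two-point configuration supported on `M` and
`M + 1`. Comparing it with `s₁² / s₂ = s₁ / (M + θ)` reduces to `θ (1 - θ) ≥ 0`.
-/

open Finset

lemma Int.sub_mul_sub_one_nonneg (x m : ℤ) : 0 ≤ (x - m) * (x - m - 1) := by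
  nlinarith [Int.le_self_sq (x - m)]

lemma Finset.sum_mul_sub_sum_sq_le {ι : Type*} (s : Finset ι) (w : ι → ℝ)
    (hw : ∀ i ∈ s, 0 ≤ w i) (x : ι → ℤ) (m : ℤ) :
    (2 * m + 1) * ∑ i ∈ s, (x i : ℝ) * w i - ∑ i ∈ s, (x i : ℝ) ^ 2 * w i
      ≤ m * (m + 1) * ∑ i ∈ s, w i := by
  have hsum : 0 ≤ ∑ i ∈ s, (((x i - m) * (x i - m - 1) : ℤ) : ℝ) * w i :=
    sum_nonneg fun i hi ↦ mul_nonneg (by exact_mod_cast (x i).sub_mul_sub_one_nonneg m) (hw i hi)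
  have hexpand : ∑ i ∈ s, (((x i - m) * (x i - m - 1) : ℤ) : ℝ) * w i
      = m * (m + 1) * ∑ i ∈ s, w i
        - ((2 * m + 1) * ∑ i ∈ s, (x i : ℝ) * w i - ∑ i ∈ s, (x i : ℝ) ^ 2 * w i) := by
    simp only [mul_sum, ← sum_sub_distrib]
    exact sum_congr rfl fun i _ ↦ by push_cast; ring
  linarith

lemma two_point_mass_eq {a m θ : ℝ} (ha : a ≠ 0) (hm : 0 < m) :
    θ * a ^ 2 / ((m + θ) * a + (1 - θ) * a) + (1 - θ) * a ^ 2 / ((m + θ) * a - θ * a)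
      = (m + 1 - θ) * a / (m * (m + 1)) := by
  have hm1 : m + 1 ≠ 0 := by positivity
  rw [show (m + θ) * a + (1 - θ) * a = (m + 1) * a by ring,
    show (m + θ) * a - θ * a = m * a by ring]
  field_simp
  ring

lemma sq_div_le_two_point_mass {a m θ : ℝ} (ha : 0 < a) (hm : 0 < m) (hθ₀ : 0 ≤ θ)
    (hθ₁ : θ ≤ 1) : a ^ 2 / ((m + θ) * a) ≤ (m + 1 - θ) * a / (m * (m + 1)) := by
  rw [div_le_div_iff₀ (by positivity) (by positivity)]
  have : 0 ≤ θ * (1 - θ) * a ^ 3 := by have := sub_nonneg.2 hθ₁; positivity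
  nlinarith

theorem frolov_cor2 (N : ℕ) (r : ℕ → ℝ)
    (hr : ∀ i ∈ Finset.Icc 1 N, 0 ≤ r i)
    (s₁ s₂ δ θ : ℝ)
    (hs₁ : s₁ = ∑ i ∈ Finset.Icc 1 N, (i : ℝ) * r i)
    (hs₂ : s₂ = ∑ i ∈ Finset.Icc 1 N, (i : ℝ) ^ 2 * r i)
    (hpos : 0 < s₁)
    (hδ : δ = s₂ / s₁) (hθ : θ = δ - ⌊δ⌋) :
    ∑ i ∈ Finset.Icc 1 N, r i
      ≥ θ * s₁ ^ 2 / (s₂ + (1 - θ) * s₁) + (1 - θ) * s₁ ^ 2 / (s₂ - θ * s₁)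
    ∧ θ * s₁ ^ 2 / (s₂ + (1 - θ) * s₁) + (1 - θ) * s₁ ^ 2 / (s₂ - θ * s₁)
      ≥ s₁ ^ 2 / s₂ := by
  have hquad (m : ℤ) : (2 * m + 1) * s₁ - s₂ ≤ m * (m + 1) * ∑ i ∈ Finset.Icc 1 N, r i := by
    simpa [hs₁, hs₂] using (Icc 1 N).sum_mul_sub_sum_sq_le r hr (fun i ↦ i) m
  rw [Int.self_sub_floor] at hθ
  have hs₂_eq : s₂ = (⌊δ⌋ + θ) * s₁ := by
    rw [hθ, Int.floor_add_fract, hδ, div_mul_cancel₀ _ hpos.ne']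
  have hM : (0 : ℝ) < ⌊δ⌋ := by
    have hs₁₂ : s₁ ≤ s₂ := by simpa using hquad 0
    have hδ₁ : 1 ≤ δ := by rwa [hδ, le_div_iff₀ hpos, one_mul]
    exact_mod_cast Int.floor_pos.2 hδ₁
  have hθ₀ : 0 ≤ θ := hθ ▸ Int.fract_nonneg δ
  have hθ₁ : θ < 1 := hθ ▸ Int.fract_lt_one δ
  have hmass := hquad ⌊δ⌋
  rw [hs₂_eq] at hmass ⊢
  rw [two_point_mass_eq hpos.ne' hM, ge_iff_le, ge_iff_le, div_le_iff₀ (by positivity)]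
  exact ⟨by linarith, sq_div_le_two_point_mass hpos hM hθ₀ hθ₁.le⟩
end

section
/- Let r_1,…,r_N ≥ 0 with N ≥ 2, and a > 0, ϱ > 0. Define s̄_1 = Σ_{i=1}^N i^a r_i and s̄_2 = Σ_{i=1}^N i^{a+ϱ} r_i. Then Σ_{i=1}^N r_i ≤ ((N^{a+ϱ} − 1)·s̄_1 − (N^a − 1)·s̄_2) / (N^{a+ϱ} − N^a). -/
/-!
Put `u = i ^ a ∈ [1, N ^ a]` and `c = (a + ϱ) / a ≥ 1`, so that `i ^ (a + ϱ) = u ^ c`.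
Since `t ↦ t ^ c` is convex, `u ^ c` lies below the chord through `(1, 1)` and `(N ^ a, N ^ (a + ϱ))`;
multiplied by `r i ≥ 0`, this chord inequality is the `i`-th summand of the claim.
-/

open Finset Real

theorem ConvexOn.sub_mul_sub_le_sub_mul_sub {s : Set ℝ} {f : ℝ → ℝ} (hf : ConvexOn ℝ s f)
    {x y z : ℝ} (hx : x ∈ s) (hz : z ∈ s) (hxy : x ≤ y) (hyz : y ≤ z) :
    (f y - f x) * (z - x) ≤ (f z - f x) * (y - x) := by
  rcases hxy.eq_or_lt with rfl | hxy
  · simp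
  rcases hyz.eq_or_lt with rfl | hyz
  · rfl
  linarith [hf.secant_mono_aux1 hx hz hxy hyz]

theorem rpow_sub_one_mul_le {u v c : ℝ} (hu : 1 ≤ u) (huv : u ≤ v) (hc : 1 ≤ c) :
    (u ^ c - 1) * (v - 1) ≤ (v ^ c - 1) * (u - 1) := by
  simpa only [one_rpow] using
    (convexOn_rpow hc).sub_mul_sub_le_sub_mul_sub (Set.mem_Ici.2 zero_le_one)
      (Set.mem_Ici.2 (by linarith)) hu huv

theorem mul_rpow_sub_rpow_le {a ϱ x M r : ℝ} (ha : 0 < a) (hϱ : 0 ≤ ϱ) (hx : 1 ≤ x)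
    (hxM : x ≤ M) (hr : 0 ≤ r) :
    r * (M ^ (a + ϱ) - M ^ a)
      ≤ (M ^ (a + ϱ) - 1) * (x ^ a * r) - (M ^ a - 1) * (x ^ (a + ϱ) * r) := by
  have hc : 1 ≤ (a + ϱ) / a := by rw [le_div_iff₀ ha]; linarith
  have rpow_pow_eq {t : ℝ} (ht : 0 ≤ t) : (t ^ a) ^ ((a + ϱ) / a) = t ^ (a + ϱ) := by
    rw [← rpow_mul ht, mul_div_cancel₀ _ ha.ne']
  have chord := rpow_sub_one_mul_le (one_le_rpow hx ha.le)
    (rpow_le_rpow (by linarith) hxM ha.le) hc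
  rw [rpow_pow_eq (by linarith), rpow_pow_eq (by linarith)] at chord
  linear_combination r * chord

theorem frolov_thm3 (N : ℕ) (hN : 2 ≤ N) (r : ℕ → ℝ) (a ϱ : ℝ)
    (hr : ∀ i ∈ Finset.Icc 1 N, 0 ≤ r i)
    (ha : 0 < a) (hϱ : 0 < ϱ) :
    ∑ i ∈ Finset.Icc 1 N, r i
      ≤ (((N : ℝ) ^ (a + ϱ) - 1) * (∑ i ∈ Finset.Icc 1 N, (i : ℝ) ^ a * r i)
          - ((N : ℝ) ^ a - 1) * ∑ i ∈ Finset.Icc 1 N, (i : ℝ) ^ (a + ϱ) * r i)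
        / ((N : ℝ) ^ (a + ϱ) - (N : ℝ) ^ a) := by
  have hN1 : (1 : ℝ) < N := by exact_mod_cast hN
  have hD : 0 < (N : ℝ) ^ (a + ϱ) - (N : ℝ) ^ a := by
    rw [sub_pos, rpow_lt_rpow_left_iff hN1]
    linarith
  rw [le_div_iff₀ hD, sum_mul, mul_sum, mul_sum, ← sum_sub_distrib]
  refine sum_le_sum fun i hi => ?_
  obtain ⟨hi1, hiN⟩ := mem_Icc.mp hi
  exact mul_rpow_sub_rpow_le ha hϱ.le (by exact_mod_cast hi1) (by exact_mod_cast hiN) (hr i hi)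
end

section
/- If either 0 < u < v < 1, or 1 < u < v, then the function f(x) = (1 − u^x)/(1 − v^x) is strictly decreasing on (0, ∞). -/
/-!
With `a = log u < b = log v`, which have the same sign, the function is
`(1 - e^{ax}) / (1 - e^{bx})`. The numerator of its derivative, times `x`, is
`ax e^{ax} (e^{bx} - 1) - bx e^{bx} (e^{ax} - 1) = (e^{ax} - 1) (e^{bx} - 1) (φ(ax) - φ(bx))`
with `φ(s) = s e^s / (e^s - 1)`. The product `(e^{ax} - 1) (e^{bx} - 1)` is positive, and `φ`
is strictly increasing on each side of `0` because `φ'(s) = e^s (e^s - 1 - s) / (e^s - 1)^2 > 0`.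
-/

open Real Set

lemma exp_sub_one_ne_zero {s : ℝ} (hs : s ≠ 0) : exp s - 1 ≠ 0 :=
  sub_ne_zero.2 fun h => hs (exp_eq_one_iff s |>.1 h)

lemma hasDerivAt_mul_exp_div_exp_sub_one {s : ℝ} (hs : s ≠ 0) :
    HasDerivAt (fun s => s * exp s / (exp s - 1))
      (exp s * (exp s - 1 - s) / (exp s - 1) ^ 2) s := by
  refine (((hasDerivAt_id' s).mul (hasDerivAt_exp s)).div
    ((hasDerivAt_exp s).sub_const 1) (exp_sub_one_ne_zero hs)).congr_deriv ?_
  simp only [Pi.mul_apply]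
  ring

-- At `0` the quotient is `0 / 0 = 0`, not its limit `1`, so `0` has to be kept out of `D`.
lemma strictMonoOn_mul_exp_div_exp_sub_one {D : Set ℝ} (hD : Convex ℝ D) (h0 : (0 : ℝ) ∉ D) :
    StrictMonoOn (fun s => s * exp s / (exp s - 1)) D := by
  have hne : ∀ s ∈ D, s ≠ 0 := fun s hs h => h0 (h ▸ hs)
  refine strictMonoOn_of_deriv_pos hD
    (fun s hs => (hasDerivAt_mul_exp_div_exp_sub_one (hne s hs)).continuousAt.continuousWithinAt)
    fun s hs => ?_
  have hs := hne s (interior_subset hs)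
  rw [(hasDerivAt_mul_exp_div_exp_sub_one hs).deriv]
  have := add_one_lt_exp hs
  exact div_pos (mul_pos (exp_pos s) (by linarith)) (sq_pos_of_ne_zero (exp_sub_one_ne_zero hs))

lemma mul_exp_mul_exp_sub_one_lt {s t : ℝ} (hst : s < t) (hsign : 0 < s * t) :
    s * exp s * (exp t - 1) < t * exp t * (exp s - 1) := by
  have hlt : s * exp s / (exp s - 1) < t * exp t / (exp t - 1) := by
    rcases pos_and_pos_or_neg_and_neg_of_mul_pos hsign with ⟨hs, ht⟩ | ⟨hs, ht⟩
    · exact strictMonoOn_mul_exp_div_exp_sub_one (convex_Ioi 0) self_notMem_Ioi hs ht hst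
    · exact strictMonoOn_mul_exp_div_exp_sub_one (convex_Iio 0) self_notMem_Iio hs ht hst
  have hden : 0 < (exp s - 1) * (exp t - 1) := by
    rcases pos_and_pos_or_neg_and_neg_of_mul_pos hsign with ⟨hs, ht⟩ | ⟨hs, ht⟩
    · exact mul_pos (sub_pos.2 (one_lt_exp_iff.2 hs)) (sub_pos.2 (one_lt_exp_iff.2 ht))
    · exact mul_pos_of_neg_of_neg (sub_neg.2 (exp_lt_one_iff.2 hs)) (sub_neg.2 (exp_lt_one_iff.2 ht))
  have hs := exp_sub_one_ne_zero (left_ne_zero_of_mul hsign.ne')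
  have ht := exp_sub_one_ne_zero (right_ne_zero_of_mul hsign.ne')
  calc s * exp s * (exp t - 1)
      = s * exp s / (exp s - 1) * ((exp s - 1) * (exp t - 1)) := by field_simp
    _ < t * exp t / (exp t - 1) * ((exp s - 1) * (exp t - 1)) := by gcongr
    _ = t * exp t * (exp s - 1) := by field_simp

lemma hasDerivAt_one_sub_exp_mul (a x : ℝ) :
    HasDerivAt (fun x => 1 - exp (a * x)) (-(exp (a * x) * a)) x := by
  simpa using ((hasDerivAt_id' x).const_mul a).exp.const_sub 1

lemma strictAntiOn_one_sub_exp_mul_div_one_sub_exp_mul {a b : ℝ} (hab : a < b)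
    (hsign : 0 < a * b) :
    StrictAntiOn (fun x => (1 - exp (a * x)) / (1 - exp (b * x))) (Ioi 0) := by
  have hden : ∀ x ∈ Ioi (0 : ℝ), 1 - exp (b * x) ≠ 0 := fun x hx => by
    rw [← neg_sub, neg_ne_zero]
    exact exp_sub_one_ne_zero (mul_ne_zero (right_ne_zero_of_mul hsign.ne') (ne_of_gt hx))
  have hderiv : ∀ x ∈ Ioi (0 : ℝ), HasDerivAt (fun x => (1 - exp (a * x)) / (1 - exp (b * x)))
      ((-(exp (a * x) * a) * (1 - exp (b * x)) - (1 - exp (a * x)) * -(exp (b * x) * b)) /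
        (1 - exp (b * x)) ^ 2) x :=
    fun x hx => (hasDerivAt_one_sub_exp_mul a x).div (hasDerivAt_one_sub_exp_mul b x) (hden x hx)
  refine strictAntiOn_of_deriv_neg (convex_Ioi 0)
    (fun x hx => (hderiv x hx).continuousAt.continuousWithinAt) fun x hx => ?_
  rw [interior_Ioi] at hx
  rw [(hderiv x hx).deriv]
  have hx₀ : 0 < x := hx
  have key := mul_exp_mul_exp_sub_one_lt (mul_lt_mul_of_pos_right hab hx₀)
    (by linarith [mul_pos hsign (mul_pos hx₀ hx₀)])
  refine div_neg_of_neg_of_pos (neg_of_mul_neg_left ?_ hx₀.le) (sq_pos_of_ne_zero (hden x hx))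
  linear_combination key

theorem frolov_lemma1 (u v : ℝ)
    (h : (0 < u ∧ u < v ∧ v < 1) ∨ (1 < u ∧ u < v)) :
    StrictAntiOn (fun x : ℝ => (1 - u ^ x) / (1 - v ^ x)) (Set.Ioi (0 : ℝ)) := by
  obtain ⟨hu, huv⟩ : 0 < u ∧ u < v := by
    rcases h with ⟨hu, huv, -⟩ | ⟨hu, huv⟩
    exacts [⟨hu, huv⟩, ⟨one_pos.trans hu, huv⟩]
  have hsign : 0 < log u * log v := by
    rcases h with ⟨hu, huv, hv⟩ | ⟨hu, huv⟩
    · exact mul_pos_of_neg_of_neg (log_neg hu (huv.trans hv)) (log_neg (hu.trans huv) hv)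
    · exact mul_pos (log_pos hu) (log_pos (hu.trans huv))
  simp only [rpow_def_of_pos hu, rpow_def_of_pos (hu.trans huv)]
  exact strictAntiOn_one_sub_exp_mul_div_one_sub_exp_mul (log_lt_log hu huv) hsign
end

section
/- Let r_1,…,r_N ≥ 0 with N ≥ 2 and ϱ ≥ 1, 0 < a ≤ ϱ. Define s̄_1 = Σ i^a r_i, s̄_2 = Σ i^{a+ϱ} r_i, s̄_3 = Σ i^{a+2ϱ} r_i, δ̄_1 = N^ϱ s̄_1 − s̄_2, δ̄_2 = N^ϱ s̄_2 − s̄_3, and δ̄ = (δ̄_2/δ̄_1)^{1/ϱ}. Assume δ̄_1 > 0. Then Σ_{i=1}^N r_i ≥ δ̄_1 (N^a − δ̄^a) / (N^a δ̄^a (N^ϱ − δ̄^ϱ)) + s̄_1/N^a. -/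
open Set Real

lemma frolov_psi_nonneg (b : ℝ) (hb : 0 < b) {u : ℝ} (hu0 : 0 < u) (hu1 : u < 1) :
    0 ≤ b*(b+1)*u^(-b-2)*(1-u)^2 - 2*b*(u^(-b-1)*(1-u)) + 2*(u^(-b)-1) := by
  set ψ : ℝ → ℝ := fun u => b*(b+1)*u^(-b-2)*(1-u)^2 - 2*b*(u^(-b-1)*(1-u)) + 2*(u^(-b)-1) with hψ
  have hderiv : ∀ x ∈ Set.Ioi (0:ℝ), HasDerivAt ψ (-(b*(b+1)*(b+2)) * x^(-b-3) * (1-x)^2) x := by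
    intro x hx
    have hx0 : x ≠ 0 := ne_of_gt hx
    have d1 : HasDerivAt (fun y : ℝ => y ^ (-b-2)) ((-b-2) * x^(-b-3)) x := by
      have := Real.hasDerivAt_rpow_const (x := x) (p := -b-2) (Or.inl hx0)
      rwa [show -b-2-1 = -b-3 by ring] at this
    have d2 : HasDerivAt (fun y : ℝ => y ^ (-b-1)) ((-b-1) * x^(-b-2)) x := by
      have := Real.hasDerivAt_rpow_const (x := x) (p := -b-1) (Or.inl hx0)
      rwa [show -b-1-1 = -b-2 by ring] at this
    have d3 : HasDerivAt (fun y : ℝ => y ^ (-b)) ((-b) * x^(-b-1)) x :=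
      Real.hasDerivAt_rpow_const (x := x) (p := -b) (Or.inl hx0)
    have dm : HasDerivAt (fun y : ℝ => (1-y)) (-1 : ℝ) x := by
      simpa using (hasDerivAt_id x).const_sub 1
    have dm2 : HasDerivAt (fun y : ℝ => (1-y)^2) (2*(1-x)^1*(-1)) x := by
      simpa using dm.fun_pow 2
    have h1 : HasDerivAt (fun y : ℝ => b*(b+1)*y^(-b-2)*(1-y)^2)
        ((b*(b+1)*((-b-2)*x^(-b-3)))*(1-x)^2 + (b*(b+1)*x^(-b-2))*(2*(1-x)^1*(-1))) x :=
      ((d1.const_mul (b*(b+1))).mul dm2)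
    have h2 : HasDerivAt (fun y : ℝ => 2*b*(y^(-b-1)*(1-y)))
        (2*b*(((-b-1)*x^(-b-2))*(1-x) + x^(-b-1)*(-1))) x :=
      (d2.mul dm).const_mul (2*b)
    have h3 : HasDerivAt (fun y : ℝ => 2*(y^(-b)-1)) (2*((-b)*x^(-b-1))) x := by
      simpa using ((d3.sub_const 1).const_mul 2)
    have := (h1.fun_sub h2).fun_add h3
    exact this.congr_deriv (by ring)
  have hanti : AntitoneOn ψ (Set.Ioc (0:ℝ) 1) := by
    apply antitoneOn_of_deriv_nonpos (convex_Ioc 0 1)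
    · intro x hx
      exact ((hderiv x hx.1).differentiableAt).continuousAt.continuousWithinAt
    · rw [interior_Ioc]
      exact fun x hx => (hderiv x hx.1).differentiableAt.differentiableWithinAt
    · rw [interior_Ioc]
      intro x hx
      rw [(hderiv x hx.1).deriv]
      have h1 : (0:ℝ) < x^(-b-3) := Real.rpow_pos_of_pos hx.1 _
      have h2 : (0:ℝ) ≤ (1-x)^2 := sq_nonneg _
      have h3 : (0:ℝ) < b*(b+1)*(b+2) := by positivity
      nlinarith [mul_nonneg (mul_nonneg h3.le h1.le) h2]
  have h1 : ψ 1 = 0 := by simp [hψ]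
  have := hanti (Set.mem_Ioc.2 ⟨hu0, le_of_lt hu1⟩) (Set.mem_Ioc.2 ⟨one_pos, le_refl 1⟩) (le_of_lt hu1)
  rw [h1] at this
  exact this

lemma frolov_phi_convex (b : ℝ) (hb : 0 < b) :
    ConvexOn ℝ (Set.Ioo (0:ℝ) 1) (fun u : ℝ => (u ^ (-b) - 1) / (1 - u)) := by
  set f : ℝ → ℝ := fun u => (u ^ (-b) - 1) / (1 - u) with hf
  set f₁ : ℝ → ℝ := fun u => ((-b) * u^(-b-1) * (1-u) + (u^(-b) - 1)) / (1-u)^2 with hf₁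
  set f₂ : ℝ → ℝ := fun u =>
    (b*(b+1)*u^(-b-2)*(1-u)^2 - 2*b*(u^(-b-1)*(1-u)) + 2*(u^(-b)-1)) / (1-u)^3 with hf₂
  have key : ∀ x ∈ Set.Ioo (0:ℝ) 1,
      HasDerivAt f (f₁ x) x ∧ HasDerivAt f₁ (f₂ x) x := by
    intro x hx
    have hx0 : x ≠ 0 := ne_of_gt hx.1
    have hx1 : (1:ℝ) - x ≠ 0 := by have := hx.2; intro h; linarith [sub_eq_zero.mp h]
    have d1 : HasDerivAt (fun y : ℝ => y ^ (-b-2)) ((-b-2) * x^(-b-3)) x := by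
      have := Real.hasDerivAt_rpow_const (x := x) (p := -b-2) (Or.inl hx0)
      rwa [show -b-2-1 = -b-3 by ring] at this
    have d2 : HasDerivAt (fun y : ℝ => y ^ (-b-1)) ((-b-1) * x^(-b-2)) x := by
      have := Real.hasDerivAt_rpow_const (x := x) (p := -b-1) (Or.inl hx0)
      rwa [show -b-1-1 = -b-2 by ring] at this
    have d3 : HasDerivAt (fun y : ℝ => y ^ (-b)) ((-b) * x^(-b-1)) x :=
      Real.hasDerivAt_rpow_const (x := x) (p := -b) (Or.inl hx0)
    have dm : HasDerivAt (fun y : ℝ => (1-y)) (-1 : ℝ) x := by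
      simpa using (hasDerivAt_id x).const_sub 1
    have dm2 : HasDerivAt (fun y : ℝ => (1-y)^2) (2*(1-x)^1*(-1)) x := by
      simpa using dm.fun_pow 2
    constructor
    · have := ((d3.sub_const 1).fun_div dm hx1)
      exact this.congr_deriv (by ring)
    · have num : HasDerivAt (fun y : ℝ => (-b) * y^(-b-1) * (1-y) + (y^(-b) - 1))
          (((-b) * ((-b-1) * x^(-b-2))) * (1-x) + ((-b) * x^(-b-1)) * (-1) + (-b) * x^(-b-1)) x :=
        (((d2.const_mul (-b)).mul dm)).add (d3.sub_const 1)
      have := num.fun_div dm2 (pow_ne_zero 2 hx1)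
      refine this.congr_deriv (Eq.symm ?_)
      simp only [hf₂]
      rw [div_eq_div_iff (pow_ne_zero 3 hx1) (pow_ne_zero 2 (pow_ne_zero 2 hx1))]
      ring
  apply convexOn_of_hasDerivWithinAt2_nonneg (f' := f₁) (f'' := f₂) (convex_Ioo 0 1)
  · intro x hx
    exact ((key x hx).1.differentiableAt).continuousAt.continuousWithinAt
  · rw [interior_Ioo]
    exact fun x hx => ((key x hx).1).hasDerivWithinAt
  · rw [interior_Ioo]
    exact fun x hx => ((key x hx).2).hasDerivWithinAt
  · rw [interior_Ioo]
    intro x hx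
    have h1 := frolov_psi_nonneg b hb hx.1 hx.2
    have h2 : (0:ℝ) < (1-x)^3 := pow_pos (by linarith [hx.2]) 3
    exact div_nonneg h1 h2.le

open Finset Real
set_option maxHeartbeats 1000000

lemma frolov_eval {x n a ϱ : ℝ} (hx : 0 < x) (hn : 0 < n) (hϱ : ϱ ≠ 0) :
    (x ^ ϱ / n ^ ϱ) ^ (-(a/ϱ)) = n ^ a / x ^ a := by
  rw [← Real.div_rpow hx.le hn.le, ← Real.rpow_mul (div_nonneg hx.le hn.le),
    show ϱ * -(a/ϱ) = -a by field_simp,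
    Real.rpow_neg (div_nonneg hx.le hn.le), Real.div_rpow hx.le hn.le, inv_div]


theorem frolov_cor6_first (N : ℕ) (hN : 2 ≤ N) (r : ℕ → ℝ) (a ϱ : ℝ)
    (hr : ∀ i ∈ Finset.Icc 1 N, 0 ≤ r i)
    (ha : 0 < a) (haϱ : a ≤ ϱ) (hϱ : 1 ≤ ϱ)
    (s₁ s₂ s₃ δ₁ δ₂ δ : ℝ)
    (hs₁ : s₁ = ∑ i ∈ Finset.Icc 1 N, (i : ℝ) ^ a * r i)
    (hs₂ : s₂ = ∑ i ∈ Finset.Icc 1 N, (i : ℝ) ^ (a + ϱ) * r i)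
    (hs₃ : s₃ = ∑ i ∈ Finset.Icc 1 N, (i : ℝ) ^ (a + 2 * ϱ) * r i)
    (hδ₁ : δ₁ = (N : ℝ) ^ ϱ * s₁ - s₂)
    (hδ₂ : δ₂ = (N : ℝ) ^ ϱ * s₂ - s₃)
    (hδ : δ = (δ₂ / δ₁) ^ (1 / ϱ))
    (hδ₁pos : 0 < δ₁) :
    ∑ i ∈ Finset.Icc 1 N, r i
      ≥ δ₁ * ((N : ℝ) ^ a - δ ^ a) / ((N : ℝ) ^ a * δ ^ a * ((N : ℝ) ^ ϱ - δ ^ ϱ))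
        + s₁ / (N : ℝ) ^ a := by
  obtain ⟨m, rfl⟩ : ∃ m, N = m + 1 := ⟨N - 1, by omega⟩
  have hm : 1 ≤ m := by omega
  set n : ℝ := ((m + 1 : ℕ) : ℝ) with hn
  have hn2 : (2:ℝ) ≤ n := by rw [hn]; exact_mod_cast hN
  have hn0 : (0:ℝ) < n := by linarith
  have hϱ0 : (0:ℝ) < ϱ := lt_of_lt_of_le one_pos hϱ
  have hb : 0 < a / ϱ := div_pos ha hϱ0
  have hnϱ : (0:ℝ) < n ^ ϱ := Real.rpow_pos_of_pos hn0 ϱ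
  have hna : (0:ℝ) < n ^ a := Real.rpow_pos_of_pos hn0 a
  set w : ℕ → ℝ := fun i => (i:ℝ)^a * (n^ϱ - (i:ℝ)^ϱ) * r i with hw
  set p : ℕ → ℝ := fun i => (i:ℝ)^ϱ / n^ϱ with hp
  have hcast : ∀ i ∈ Finset.Icc 1 (m+1), (1:ℝ) ≤ (i:ℝ) ∧ (i:ℝ) ≤ n := by
    intro i hi
    obtain ⟨h1, h2⟩ := Finset.mem_Icc.mp hi
    exact ⟨by exact_mod_cast h1, by rw [hn]; exact_mod_cast h2⟩
  have hwnn : ∀ i ∈ Finset.Icc 1 (m+1), 0 ≤ w i := by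
    intro i hi
    obtain ⟨h1, h2⟩ := hcast i hi
    have e1 : (i:ℝ)^ϱ ≤ n^ϱ := Real.rpow_le_rpow (by linarith) h2 hϱ0.le
    have e2 : (0:ℝ) ≤ (i:ℝ)^a := (Real.rpow_pos_of_pos (by linarith) a).le
    exact mul_nonneg (mul_nonneg e2 (by linarith)) (hr i hi)
  have hδ1 : δ₁ = ∑ i ∈ Finset.Icc 1 (m+1), w i := by
    rw [hδ₁, hs₁, hs₂, Finset.mul_sum, ← Finset.sum_sub_distrib]
    refine Finset.sum_congr rfl fun i hi => ?_
    have h1 := (hcast i hi).1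
    rw [Real.rpow_add (by linarith : (0:ℝ) < (i:ℝ))]
    simp only [hw]; ring
  have hδ2 : δ₂ = ∑ i ∈ Finset.Icc 1 (m+1), w i * (i:ℝ)^ϱ := by
    rw [hδ₂, hs₂, hs₃, Finset.mul_sum, ← Finset.sum_sub_distrib]
    refine Finset.sum_congr rfl fun i hi => ?_
    have h1 := (hcast i hi).1
    have hi0 : (0:ℝ) < (i:ℝ) := by linarith
    rw [show a + 2*ϱ = a + ϱ + ϱ by ring]
    simp only [Real.rpow_add hi0]
    simp only [hw]; ring
  have wtop : w (m+1) = 0 := by simp [hw, hn]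
  have hsumw : ∑ i ∈ Finset.Icc 1 m, w i = δ₁ := by
    rw [hδ1, Finset.sum_Icc_succ_top (by omega), wtop, add_zero]
  have hsumwp : ∑ i ∈ Finset.Icc 1 m, w i * (i:ℝ)^ϱ = δ₂ := by
    rw [hδ2, Finset.sum_Icc_succ_top (by omega), wtop, zero_mul, add_zero]
  have hδ21 : δ₁ ≤ δ₂ := by
    rw [hδ1, hδ2]
    refine Finset.sum_le_sum fun i hi => ?_
    exact le_mul_of_one_le_right (hwnn i hi) (Real.one_le_rpow (hcast i hi).1 hϱ0.le)
  have hδ₂pos : 0 < δ₂ := lt_of_lt_of_le hδ₁pos hδ21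
  have hδpos : 0 < δ := by
    rw [hδ]; exact Real.rpow_pos_of_pos (div_pos hδ₂pos hδ₁pos) _
  have hδϱ : δ ^ ϱ = δ₂ / δ₁ := by
    rw [hδ, ← Real.rpow_mul (div_pos hδ₂pos hδ₁pos).le, one_div,
      inv_mul_cancel₀ hϱ0.ne', Real.rpow_one]
  have hub : δ₂ ≤ (m:ℝ)^ϱ * δ₁ := by
    rw [hδ1, hδ2, Finset.mul_sum]
    refine Finset.sum_le_sum fun i hi => ?_
    rcases eq_or_ne i (m+1) with h | h
    · subst h; rw [wtop]; simp
    · have him : i ≤ m := by have := (Finset.mem_Icc.mp hi).2; omega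
      have him' : (i:ℝ) ≤ (m:ℝ) := by exact_mod_cast him
      have h1 := (hcast i hi).1
      rw [mul_comm ((m:ℝ)^ϱ) (w i)]
      exact mul_le_mul_of_nonneg_left
        (Real.rpow_le_rpow (by linarith) him' hϱ0.le) (hwnn i hi)
  have hmn : ((m:ℝ))^ϱ < n^ϱ := by
    refine Real.rpow_lt_rpow (Nat.cast_nonneg m) ?_ hϱ0
    rw [hn]; push_cast; linarith
  have hδϱlt : δ ^ ϱ < n ^ ϱ := by
    rw [hδϱ, div_lt_iff₀ hδ₁pos]
    calc δ₂ ≤ (m:ℝ)^ϱ * δ₁ := hub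
      _ < n^ϱ * δ₁ := by exact mul_lt_mul_of_pos_right hmn hδ₁pos
  have hgap : (0:ℝ) < n^ϱ - δ^ϱ := by linarith
  have hδa : (0:ℝ) < δ^a := Real.rpow_pos_of_pos hδpos a
  -- Jensen
  have hconv := frolov_phi_convex (a/ϱ) hb
  have hmem : ∀ i ∈ Finset.Icc 1 m, p i ∈ Set.Ioo (0:ℝ) 1 := by
    intro i hi
    obtain ⟨h1, h2⟩ := Finset.mem_Icc.mp hi
    have hi1 : (1:ℝ) ≤ (i:ℝ) := by exact_mod_cast h1
    have him : (i:ℝ) < n := by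
      have : (i:ℝ) ≤ (m:ℝ) := by exact_mod_cast h2
      rw [hn]; push_cast; linarith
    constructor
    · exact div_pos (Real.rpow_pos_of_pos (by linarith) _) hnϱ
    · rw [div_lt_one hnϱ]
      exact Real.rpow_lt_rpow (by linarith) him hϱ0
  have hsub : ∀ i ∈ Finset.Icc 1 m, i ∈ Finset.Icc 1 (m+1) := by
    intro i hi
    have := Finset.mem_Icc.mp hi
    exact Finset.mem_Icc.mpr ⟨this.1, by omega⟩
  have hwpos : 0 < ∑ i ∈ Finset.Icc 1 m, w i := by rw [hsumw]; exact hδ₁pos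
  have hJ := hconv.map_centerMass_le (fun i hi => hwnn i (hsub i hi)) hwpos hmem
  simp only [Finset.centerMass, smul_eq_mul, hsumw, Function.comp] at hJ
  have hcm1 : δ₁⁻¹ * ∑ i ∈ Finset.Icc 1 m, w i * p i = δ^ϱ/n^ϱ := by
    have e1 : ∑ i ∈ Finset.Icc 1 m, w i * p i = δ₂ / n^ϱ := by
      rw [eq_div_iff hnϱ.ne', Finset.sum_mul, ← hsumwp]
      refine Finset.sum_congr rfl fun i hi => ?_
      simp only [hp]
      field_simp
    rw [e1, hδϱ]
    field_simp
  have hterm : ∀ i ∈ Finset.Icc 1 m,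
      w i * (((p i)^(-(a/ϱ)) - 1)/(1 - p i)) = n^ϱ * ((n^a - (i:ℝ)^a) * r i) := by
    intro i hi
    obtain ⟨h1, h2⟩ := Finset.mem_Icc.mp hi
    have hi1 : (1:ℝ) ≤ (i:ℝ) := by exact_mod_cast h1
    have hi0 : (0:ℝ) < (i:ℝ) := by linarith
    have hmem' := hmem i hi
    have hgapi : (0:ℝ) < n^ϱ - (i:ℝ)^ϱ := by
      have := hmem'.2
      rw [hp, div_lt_one hnϱ] at this
      linarith
    have hia : (0:ℝ) < (i:ℝ)^a := Real.rpow_pos_of_pos hi0 a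
    have he1 : (p i)^(-(a/ϱ)) = n^a/(i:ℝ)^a := frolov_eval hi0 hn0 hϱ0.ne'
    have he2 : 1 - p i = (n^ϱ - (i:ℝ)^ϱ)/n^ϱ := by
      simp only [hp]; field_simp
    rw [he1, he2]
    field_simp
    ring
  have hsum3 : ∑ i ∈ Finset.Icc 1 m, (n^a - (i:ℝ)^a) * r i
      = n^a * (∑ i ∈ Finset.Icc 1 (m+1), r i) - s₁ := by
    have e1 : ∑ i ∈ Finset.Icc 1 (m+1), (n^a - (i:ℝ)^a) * r i
        = n^a * (∑ i ∈ Finset.Icc 1 (m+1), r i) - s₁ := by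
      rw [hs₁, Finset.mul_sum, ← Finset.sum_sub_distrib]
      exact Finset.sum_congr rfl fun i _ => by ring
    rw [← e1, Finset.sum_Icc_succ_top (by omega)]
    simp [hn]
  have hRHS : ∑ i ∈ Finset.Icc 1 m,
      w i * (((p i)^(-(a/ϱ)) - 1)/(1 - p i))
      = n^ϱ * (n^a * (∑ i ∈ Finset.Icc 1 (m+1), r i) - s₁) := by
    rw [Finset.sum_congr rfl hterm, ← Finset.mul_sum, hsum3]
  rw [hcm1] at hJ
  set R : ℝ := ∑ i ∈ Finset.Icc 1 (m+1), r i with hR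
  have hJ' : (n^a/δ^a - 1)/((n^ϱ - δ^ϱ)/n^ϱ) ≤ δ₁⁻¹ * (n^ϱ * (n^a * R - s₁)) := by
    have heL : ((δ^ϱ/n^ϱ)^(-(a/ϱ)) - 1)/(1 - δ^ϱ/n^ϱ)
        = (n^a/δ^a - 1)/((n^ϱ - δ^ϱ)/n^ϱ) := by
      rw [frolov_eval hδpos hn0 hϱ0.ne']
      congr 1
      field_simp
    rw [← heL]
    calc ((δ^ϱ/n^ϱ)^(-(a/ϱ)) - 1)/(1 - δ^ϱ/n^ϱ)
        ≤ δ₁⁻¹ * ∑ i ∈ Finset.Icc 1 m, w i * (((p i)^(-(a/ϱ)) - 1)/(1 - p i)) := hJ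
      _ = δ₁⁻¹ * (n^ϱ * (n^a * R - s₁)) := by rw [hRHS]
  have hJ'' : (n^a - δ^a)*n^ϱ/(δ^a*(n^ϱ - δ^ϱ)) ≤ δ₁⁻¹ * (n^ϱ * (n^a * R - s₁)) := by
    have : (n^a/δ^a - 1)/((n^ϱ - δ^ϱ)/n^ϱ) = (n^a - δ^a)*n^ϱ/(δ^a*(n^ϱ - δ^ϱ)) := by
      rw [div_eq_div_iff (by positivity) (ne_of_gt (mul_pos hδa hgap))]
      field_simp
    rwa [this] at hJ'
  rw [div_le_iff₀ (mul_pos hδa hgap)] at hJ''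
  have h2 := mul_le_mul_of_nonneg_left hJ'' hδ₁pos.le
  have h3 : δ₁ * (δ₁⁻¹ * (n^ϱ * (n^a * R - s₁)) * (δ^a*(n^ϱ - δ^ϱ)))
      = n^ϱ * ((n^a * R - s₁) * (δ^a*(n^ϱ - δ^ϱ))) := by
    field_simp
  rw [h3, show δ₁ * ((n^a - δ^a)*n^ϱ) = n^ϱ * (δ₁ * (n^a - δ^a)) from by ring] at h2
  have key : δ₁ * (n^a - δ^a) ≤ (n^a * R - s₁) * (δ^a*(n^ϱ - δ^ϱ)) :=
    le_of_mul_le_mul_left h2 hnϱ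
  have key2 := mul_le_mul_of_nonneg_right key hna.le
  rw [ge_iff_le, div_add_div _ _ (ne_of_gt (mul_pos (mul_pos hna hδa) hgap)) hna.ne',
    div_le_iff₀ (by exact mul_pos (mul_pos (mul_pos hna hδa) hgap) hna)]
  nlinarith [key2]
end

section
/- Let r_1,…,r_N ≥ 0 with N ≥ 2 and ϱ ≥ 1, a ≥ ϱ > 0. Define s̄_1 = Σ i^a r_i, s̄_2 = Σ i^{a+ϱ} r_i, s̄_3 = Σ i^{a+2ϱ} r_i, δ̄_1 = N^ϱ s̄_1 − s̄_2, δ̄_2 = N^ϱ s̄_2 − s̄_3, δ̄ = (δ̄_2/δ̄_1)^{1/ϱ}. Assume δ̄_1 > 0 and δ̄ > 1. Then Σ_{i=1}^N r_i ≥ δ̄_1 (N^a − (δ̄−1)^a) / (N^a δ̄^a (N^ϱ − (δ̄−1)^ϱ)) + s̄_1/N^a. -/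
/-!
Put `T = N^ϱ`, `β = a/ϱ ≥ 1` and give the point `z_i = i^ϱ` the weight
`w_i = i^a (T - z_i) r_i ≥ 0`. Then `∑ w_i = δ̄₁`, `∑ w_i z_i = δ̄₂`, so `δ̄^ϱ = δ̄₂/δ̄₁` is the
barycentre of the `z_i`, and `ψ(s) = (T^β s^(-β) - 1)/(T - s)` (`invPowSecant T β`) satisfies
`w_i ψ(z_i) = (N^a - i^a) r_i`. As the average of `β T^β u^(-β-1)` over the segment from `T`
to `s`, `ψ` is convex on `(0, T)`, so Jensen gives `δ̄₁ ψ(δ̄^ϱ) ≤ N^a ∑ r_i - s̄₁`. Finally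
`c^β ψ(c) = (T^β - c^β)/(T - c)` is a secant slope of the convex `t ↦ t^β`, which only
decreases when `c = δ̄^ϱ` is replaced by `(δ̄ - 1)^ϱ`.
-/

open Finset Real Set

theorem convexOn_rpow_of_nonpos {p : ℝ} (hp : p ≤ 0) :
    ConvexOn ℝ (Ioi 0) fun x : ℝ => x ^ p := by
  have himage : log '' Ioi 0 = univ := eq_univ_of_forall fun y => ⟨exp y, exp_pos y, log_exp y⟩
  have hexp : ConvexOn ℝ univ fun y : ℝ => exp (y * p) :=
    convexOn_exp.comp_linearMap (LinearMap.mul ℝ ℝ |>.flip p)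
  have hanti : AntitoneOn (fun y : ℝ => exp (y * p)) univ := fun y _ z _ hyz =>
    exp_le_exp.2 (mul_le_mul_of_nonpos_right hyz hp)
  rw [← himage] at hexp hanti
  refine (hexp.comp_concaveOn strictConcaveOn_log_Ioi.concaveOn hanti).congr fun x hx => ?_
  simp [rpow_def_of_pos (mem_Ioi.1 hx)]

noncomputable def invPowSecant (T β s : ℝ) : ℝ := (T ^ β * s ^ (-β) - 1) / (T - s)

theorem invPowSecant_eq_div {T β s : ℝ} (hs : 0 < s) :
    invPowSecant T β s = (T ^ β - s ^ β) / (s ^ β * (T - s)) := by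
  rw [invPowSecant, rpow_neg hs.le]
  field_simp

theorem add_mul_sub_pos_of_mem_Icc {T s σ : ℝ} (hT : 0 < T) (hs : 0 < s)
    (hσ : σ ∈ Icc (0 : ℝ) 1) : 0 < T + σ * (s - T) := by
  rcases le_total T s with h | h <;> nlinarith [hσ.1, hσ.2]

theorem continuousOn_invPowSecant_integrand {T β s : ℝ} (hT : 0 < T) (hs : 0 < s) :
    ContinuousOn (fun σ => β * T ^ β * (T + σ * (s - T)) ^ (-β - 1)) (Icc 0 1) :=
  continuousOn_const.mul <|
    (by fun_prop : Continuous fun σ : ℝ => T + σ * (s - T)).continuousOn.rpow_const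
      fun _ hσ => Or.inl (add_mul_sub_pos_of_mem_Icc hT hs hσ).ne'

theorem invPowSecant_eq_integral {T β s : ℝ} (hT : 0 < T) (hs : 0 < s) (hsT : s ≠ T) :
    invPowSecant T β s = ∫ σ in (0 : ℝ)..1, β * T ^ β * (T + σ * (s - T)) ^ (-β - 1) := by
  have hderiv : ∀ σ ∈ uIcc (0 : ℝ) 1,
      HasDerivAt (fun σ => T ^ β / (T - s) * (T + σ * (s - T)) ^ (-β))
        (β * T ^ β * (T + σ * (s - T)) ^ (-β - 1)) σ := by
    intro σ hσ
    rw [Set.uIcc_of_le zero_le_one] at hσ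
    have hline : HasDerivAt (fun σ : ℝ => T + σ * (s - T)) (s - T) σ := by
      simpa using ((hasDerivAt_id σ).mul_const (s - T)).const_add T
    refine ((hline.rpow_const (Or.inl (add_mul_sub_pos_of_mem_Icc hT hs hσ).ne')).const_mul
      (T ^ β / (T - s))).congr_deriv ?_
    field_simp [sub_ne_zero.2 hsT.symm]
    ring
  have hint := (continuousOn_invPowSecant_integrand (β := β) hT hs).intervalIntegrable_of_Icc
    (μ := MeasureTheory.volume) zero_le_one
  rw [intervalIntegral.integral_eq_sub_of_hasDerivAt hderiv hint]
  simp only [one_mul, zero_mul, add_zero, add_sub_cancel, invPowSecant]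
  rw [rpow_neg hT.le]
  field_simp

theorem convexOn_invPowSecant {T β : ℝ} (hβ : 0 ≤ β) :
    ConvexOn ℝ (Ioo 0 T) (invPowSecant T β) := by
  refine ⟨convex_Ioo 0 T, fun x hx y hy a b ha hb hab => ?_⟩
  have hz : a * x + b * y ∈ Ioo 0 T := by simpa using convex_Ioo 0 T hx hy ha hb hab
  have hT : 0 < T := hx.1.trans hx.2
  have hint : ∀ s ∈ Ioo 0 T,
      IntervalIntegrable (fun σ => β * T ^ β * (T + σ * (s - T)) ^ (-β - 1))
        MeasureTheory.volume 0 1 := fun s hs =>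
    (continuousOn_invPowSecant_integrand hT hs.1).intervalIntegrable_of_Icc zero_le_one
  simp only [smul_eq_mul, invPowSecant_eq_integral hT hx.1 hx.2.ne,
    invPowSecant_eq_integral hT hy.1 hy.2.ne, invPowSecant_eq_integral hT hz.1 hz.2.ne,
    ← intervalIntegral.integral_const_mul]
  rw [← intervalIntegral.integral_add ((hint x hx).const_mul a) ((hint y hy).const_mul b)]
  refine intervalIntegral.integral_mono_on zero_le_one (hint _ hz)
    (((hint x hx).const_mul a).add ((hint y hy).const_mul b)) fun σ hσ => ?_
  have hsplit :
      T + σ * (a * x + b * y - T) = a * (T + σ * (x - T)) + b * (T + σ * (y - T)) := by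
    linear_combination (σ * T - T) * hab
  have hconv := (convexOn_rpow_of_nonpos (p := -β - 1) (by linarith)).2
    (add_mul_sub_pos_of_mem_Icc hT hx.1 hσ) (add_mul_sub_pos_of_mem_Icc hT hy.1 hσ) ha hb hab
  simp only [smul_eq_mul] at hconv
  rw [hsplit]
  linarith [mul_le_mul_of_nonneg_left hconv (by positivity : 0 ≤ β * T ^ β)]

theorem div_le_invPowSecant {T β c d : ℝ} (hβ : 1 ≤ β) (hd : 0 ≤ d) (hdc : d < c)
    (hcT : c < T) :
    (T ^ β - d ^ β) / (c ^ β * (T - d)) ≤ invPowSecant T β c := by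
  have hc : 0 < c := hd.trans_lt hdc
  have hslope := (convexOn_rpow hβ).secant_mono (a := T) (by simp; linarith) hd
    (by simp; linarith) (by linarith) (by linarith) hdc.le
  rw [← neg_div_neg_eq, neg_sub, neg_sub, ← neg_div_neg_eq (c ^ β - T ^ β), neg_sub,
    neg_sub] at hslope
  rw [invPowSecant_eq_div hc, mul_comm, ← div_div, mul_comm, ← div_div]
  exact div_le_div_of_nonneg_right hslope (by positivity)

theorem rpow_rpow_div {x : ℝ} (hx : 0 ≤ x) (a : ℝ) {ϱ : ℝ} (hϱ : ϱ ≠ 0) :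
    (x ^ ϱ) ^ (a / ϱ) = x ^ a := by
  rw [← rpow_mul hx, mul_div_cancel₀ a hϱ]

theorem rpow_mul_sub_mul_invPowSecant {x X : ℝ} (hx : 0 < x) (hxX : x < X) (a : ℝ) {ϱ : ℝ}
    (hϱ : 0 < ϱ) :
    x ^ a * (X ^ ϱ - x ^ ϱ) * invPowSecant (X ^ ϱ) (a / ϱ) (x ^ ϱ) = X ^ a - x ^ a := by
  have hgap : X ^ ϱ - x ^ ϱ ≠ 0 := (sub_pos.2 (rpow_lt_rpow hx.le hxX hϱ)).ne'
  rw [invPowSecant, rpow_rpow_div (hx.trans hxX).le a hϱ.ne', ← neg_div,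
    rpow_rpow_div hx.le _ hϱ.ne', rpow_neg hx.le]
  field_simp

theorem mul_sum_rpow_sub_sum_rpow_add {ι : Type*} {t : Finset ι} {x : ι → ℝ}
    (hx : ∀ i ∈ t, 0 < x i) (r : ι → ℝ) (X b ϱ : ℝ) :
    X ^ ϱ * ∑ i ∈ t, x i ^ b * r i - ∑ i ∈ t, x i ^ (b + ϱ) * r i
      = ∑ i ∈ t, x i ^ b * (X ^ ϱ - x i ^ ϱ) * r i := by
  rw [mul_sum, ← sum_sub_distrib]
  refine sum_congr rfl fun i hi => ?_
  rw [rpow_add (hx i hi)]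
  ring

theorem mul_invPowSecant_le_sum {ι : Type*} {t : Finset ι} {x r : ι → ℝ} {X a ϱ δ₁ δ₂ : ℝ}
    (hϱ : 0 < ϱ) (ha : 0 ≤ a) (hx : ∀ i ∈ t, 0 < x i ∧ x i ≤ X) (hr : ∀ i ∈ t, 0 ≤ r i)
    (hδ₁ : δ₁ = ∑ i ∈ t, x i ^ a * (X ^ ϱ - x i ^ ϱ) * r i)
    (hδ₂ : δ₂ = ∑ i ∈ t, x i ^ (a + ϱ) * (X ^ ϱ - x i ^ ϱ) * r i) (hδ₁pos : 0 < δ₁) :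
    δ₂ / δ₁ ∈ Ioo 0 (X ^ ϱ) ∧
      δ₁ * invPowSecant (X ^ ϱ) (a / ϱ) (δ₂ / δ₁)
        ≤ X ^ a * ∑ i ∈ t, r i - ∑ i ∈ t, x i ^ a * r i := by
  classical
  set w : ι → ℝ := fun i => x i ^ a * (X ^ ϱ - x i ^ ϱ) * r i
  set z : ι → ℝ := fun i => x i ^ ϱ
  set t' := t.filter (x · < X)
  have hrestrict (f : ι → ℝ) (hf : ∀ i ∈ t, x i = X → f i = 0) :
      ∑ i ∈ t', f i = ∑ i ∈ t, f i :=
    sum_filter_of_ne fun i hi hfi => (hx i hi).2.lt_of_ne fun h => hfi (hf i hi h)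
  have hw : ∀ i ∈ t', 0 ≤ w i := by
    intro i hi
    rw [mem_filter] at hi
    have := rpow_lt_rpow (hx i hi.1).1.le hi.2 hϱ
    exact mul_nonneg (mul_nonneg (rpow_nonneg (hx i hi.1).1.le a) (by linarith)) (hr i hi.1)
  have hz : ∀ i ∈ t', z i ∈ Ioo 0 (X ^ ϱ) := by
    intro i hi
    rw [mem_filter] at hi
    exact ⟨rpow_pos_of_pos (hx i hi.1).1 ϱ, rpow_lt_rpow (hx i hi.1).1.le hi.2 hϱ⟩
  have hsum : ∑ i ∈ t', w i = δ₁ := by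
    rw [hδ₁, hrestrict]; intro i _ h; simp [w, h]
  have hcm : t'.centerMass w z = δ₂ / δ₁ := by
    rw [centerMass, hsum, hδ₂, ← hrestrict]
    · simp only [smul_eq_mul, inv_mul_eq_div, w, z]
      refine congrArg (· / δ₁) (sum_congr rfl fun i hi => ?_)
      rw [rpow_add (hx i (mem_filter.1 hi).1).1]
      ring
    · intro i _ h; simp [h]
  refine ⟨hcm ▸ (convex_Ioo _ _).centerMass_mem hw (hsum ▸ hδ₁pos) hz, ?_⟩
  have hjensen := (convexOn_invPowSecant (T := X ^ ϱ) (div_nonneg ha hϱ.le)).map_centerMass_le hw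
    (hsum ▸ hδ₁pos) hz
  rw [hcm, centerMass, hsum, smul_eq_mul, ← div_eq_inv_mul, le_div_iff₀' hδ₁pos] at hjensen
  refine hjensen.trans_eq ?_
  rw [mul_sum, ← sum_sub_distrib, ← hrestrict]
  · refine sum_congr rfl fun i hi => ?_
    rw [mem_filter] at hi
    simp only [smul_eq_mul, Function.comp, w, z]
    rw [mul_right_comm, rpow_mul_sub_mul_invPowSecant (hx i hi.1).1 hi.2 a hϱ, sub_mul]
  · intro i _ h; simp [h]

theorem frolov_cor6_second_general (N : ℕ) (r : ℕ → ℝ) (a ϱ : ℝ)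
    (hr : ∀ i ∈ Finset.Icc 1 N, 0 ≤ r i)
    (hϱ0 : 0 < ϱ) (haϱ : ϱ ≤ a)
    (s₁ s₂ s₃ δ₁ δ₂ δ : ℝ)
    (hs₁ : s₁ = ∑ i ∈ Finset.Icc 1 N, (i : ℝ) ^ a * r i)
    (hs₂ : s₂ = ∑ i ∈ Finset.Icc 1 N, (i : ℝ) ^ (a + ϱ) * r i)
    (hs₃ : s₃ = ∑ i ∈ Finset.Icc 1 N, (i : ℝ) ^ (a + 2 * ϱ) * r i)
    (hδ₁ : δ₁ = (N : ℝ) ^ ϱ * s₁ - s₂)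
    (hδ₂ : δ₂ = (N : ℝ) ^ ϱ * s₂ - s₃)
    (hδ : δ = (δ₂ / δ₁) ^ (1 / ϱ))
    (hδ₁pos : 0 < δ₁) (hδgt : 1 < δ) :
    ∑ i ∈ Finset.Icc 1 N, r i
      ≥ δ₁ * ((N : ℝ) ^ a - (δ - 1) ^ a)
          / ((N : ℝ) ^ a * δ ^ a * ((N : ℝ) ^ ϱ - (δ - 1) ^ ϱ))
        + s₁ / (N : ℝ) ^ a := by
  have hx : ∀ i ∈ Finset.Icc 1 N, 0 < (i : ℝ) ∧ (i : ℝ) ≤ N := fun i hi => by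
    rw [Finset.mem_Icc] at hi; exact ⟨by exact_mod_cast hi.1, by exact_mod_cast hi.2⟩
  have hx₀ : ∀ i ∈ Finset.Icc 1 N, 0 < (i : ℝ) := fun i hi => (hx i hi).1
  have hδ₁sum :
      δ₁ = ∑ i ∈ Finset.Icc 1 N, (i : ℝ) ^ a * ((N : ℝ) ^ ϱ - (i : ℝ) ^ ϱ) * r i := by
    rw [hδ₁, hs₁, hs₂, mul_sum_rpow_sub_sum_rpow_add hx₀]
  obtain ⟨⟨hc0, hcN⟩, hjensen⟩ := mul_invPowSecant_le_sum hϱ0 (hϱ0.le.trans haϱ) hx hr hδ₁sum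
    (hδ₂.trans (by rw [hs₂, hs₃, two_mul, ← add_assoc, mul_sum_rpow_sub_sum_rpow_add hx₀]))
    hδ₁pos
  obtain ⟨i, hi⟩ := nonempty_of_sum_ne_zero (hδ₁sum ▸ hδ₁pos.ne')
  have hN : (0 : ℝ) < N := (hx i hi).1.trans_le (hx i hi).2
  have hc : δ₂ / δ₁ = δ ^ ϱ := by rw [hδ, one_div, rpow_inv_rpow hc0.le hϱ0.ne']
  have hbound := div_le_invPowSecant ((one_le_div hϱ0).2 haϱ)
    (rpow_nonneg (by linarith) ϱ) (rpow_lt_rpow (by linarith) (sub_lt_self δ one_pos) hϱ0)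
    (hc ▸ hcN)
  rw [rpow_rpow_div hN.le a hϱ0.ne', rpow_rpow_div (by linarith : 0 ≤ δ - 1) a hϱ0.ne',
    rpow_rpow_div (by linarith : 0 ≤ δ) a hϱ0.ne'] at hbound
  rw [hc, ← hs₁] at hjensen
  have hNa : 0 < (N : ℝ) ^ a := rpow_pos_of_pos hN a
  rw [ge_iff_le, mul_assoc, div_mul_eq_div_div_swap, mul_div_assoc, ← add_div,
    div_le_iff₀ hNa]
  linarith [mul_le_mul_of_nonneg_left hbound hδ₁pos.le]

theorem frolov_cor6_second (N : ℕ) (hN : 2 ≤ N) (r : ℕ → ℝ) (a ϱ : ℝ)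
    (hr : ∀ i ∈ Finset.Icc 1 N, 0 ≤ r i)
    (hϱ : 1 ≤ ϱ) (hϱ0 : 0 < ϱ) (haϱ : ϱ ≤ a)
    (s₁ s₂ s₃ δ₁ δ₂ δ : ℝ)
    (hs₁ : s₁ = ∑ i ∈ Finset.Icc 1 N, (i : ℝ) ^ a * r i)
    (hs₂ : s₂ = ∑ i ∈ Finset.Icc 1 N, (i : ℝ) ^ (a + ϱ) * r i)
    (hs₃ : s₃ = ∑ i ∈ Finset.Icc 1 N, (i : ℝ) ^ (a + 2 * ϱ) * r i)
    (hδ₁ : δ₁ = (N : ℝ) ^ ϱ * s₁ - s₂)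
    (hδ₂ : δ₂ = (N : ℝ) ^ ϱ * s₂ - s₃)
    (hδ : δ = (δ₂ / δ₁) ^ (1 / ϱ))
    (hδ₁pos : 0 < δ₁) (hδgt : 1 < δ) :
    ∑ i ∈ Finset.Icc 1 N, r i
      ≥ δ₁ * ((N : ℝ) ^ a - (δ - 1) ^ a)
          / ((N : ℝ) ^ a * δ ^ a * ((N : ℝ) ^ ϱ - (δ - 1) ^ ϱ))
        + s₁ / (N : ℝ) ^ a :=
  frolov_cor6_second_general N r a ϱ hr hϱ0 haϱ s₁ s₂ s₃ δ₁ δ₂ δ hs₁ hs₂ hs₃ hδ₁ hδ₂ hδ hδ₁pos hδgt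
end

section
/- Let r_1,…,r_N ≥ 0. Define s̄_1 = Σ i^a r_i, s̄_2 = Σ i^{a+ϱ} r_i, s̄_3 = Σ i^{a+2ϱ} r_i for a > 0, ϱ > 0, and set δ̂_1 = s̄_2 − s̄_1, δ̂_2 = s̄_3 − s̄_2. Then δ̂_1 ≥ 0, δ̂_2 ≥ 0, and δ̂_2 ≥ 2^ϱ · δ̂_1. In particular, if δ̂_1 > 0 then (δ̂_2/δ̂_1)^{1/ϱ} ≥ 2. -/
/-!
On `i ≥ 1` the map `p ↦ i ^ p` is increasing, so the moments `∑ i ^ p * r i` increase with `p`.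
Moreover `i ^ (a + 2ϱ) - i ^ (a + ϱ) = i ^ ϱ * (i ^ (a + ϱ) - i ^ a)`, where the factor `i ^ ϱ`
is at least `2 ^ ϱ` for every `i ≥ 2`, and the bracket vanishes at `i = 1`; summing gives
`δ₂ ≥ 2 ^ ϱ * δ₁`.
-/

open Finset Real

noncomputable def powerMoment (s : Finset ℕ) (r : ℕ → ℝ) (p : ℝ) : ℝ :=
  ∑ i ∈ s, (i : ℝ) ^ p * r i

theorem powerMoment_sub (s : Finset ℕ) (r : ℕ → ℝ) (p q : ℝ) :
    powerMoment s r q - powerMoment s r p = ∑ i ∈ s, ((i : ℝ) ^ q - (i : ℝ) ^ p) * r i := by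
  simp only [powerMoment, ← sum_sub_distrib, sub_mul]

section PowerMoment

variable {s : Finset ℕ} {r : ℕ → ℝ}

theorem powerMoment_mono (hs : ∀ i ∈ s, 1 ≤ i) (hr : ∀ i ∈ s, 0 ≤ r i) {p q : ℝ}
    (hpq : p ≤ q) : powerMoment s r p ≤ powerMoment s r q :=
  sum_le_sum fun i hi => mul_le_mul_of_nonneg_right
    (rpow_le_rpow_of_exponent_le (by exact_mod_cast hs i hi) hpq) (hr i hi)

theorem two_rpow_mul_rpow_sub_le (n : ℕ) (hn : 1 ≤ n) {ϱ : ℝ} (hϱ : 0 ≤ ϱ) (b : ℝ) :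
    (2 : ℝ) ^ ϱ * ((n : ℝ) ^ (b + ϱ) - (n : ℝ) ^ b)
      ≤ (n : ℝ) ^ (b + 2 * ϱ) - (n : ℝ) ^ (b + ϱ) := by
  have hn₁ : (1 : ℝ) ≤ n := by exact_mod_cast hn
  have hfactor : (n : ℝ) ^ (b + 2 * ϱ) - (n : ℝ) ^ (b + ϱ)
      = (n : ℝ) ^ ϱ * ((n : ℝ) ^ (b + ϱ) - (n : ℝ) ^ b) := by
    rw [mul_sub, ← rpow_add (by positivity), ← rpow_add (by positivity)]
    ring_nf
  rw [hfactor]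
  rcases hn.eq_or_lt with rfl | hn₂
  · simp
  · have hincr : 0 ≤ (n : ℝ) ^ (b + ϱ) - (n : ℝ) ^ b :=
      sub_nonneg.mpr (rpow_le_rpow_of_exponent_le hn₁ (by linarith))
    have h2n : (2 : ℝ) ≤ n := by exact_mod_cast hn₂
    exact mul_le_mul_of_nonneg_right (rpow_le_rpow (by norm_num) h2n hϱ) hincr

theorem two_rpow_mul_powerMoment_sub_le (hs : ∀ i ∈ s, 1 ≤ i) (hr : ∀ i ∈ s, 0 ≤ r i)
    {ϱ : ℝ} (hϱ : 0 ≤ ϱ) (b : ℝ) :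
    (2 : ℝ) ^ ϱ * (powerMoment s r (b + ϱ) - powerMoment s r b)
      ≤ powerMoment s r (b + 2 * ϱ) - powerMoment s r (b + ϱ) := by
  rw [powerMoment_sub, powerMoment_sub, mul_sum]
  refine sum_le_sum fun i hi => ?_
  rw [← mul_assoc]
  exact mul_le_mul_of_nonneg_right (two_rpow_mul_rpow_sub_le i (hs i hi) hϱ b) (hr i hi)

end PowerMoment

theorem two_le_div_rpow_one_div {ϱ d₁ d₂ : ℝ} (hϱ : 0 < ϱ) (hd₁ : 0 < d₁)
    (h : (2 : ℝ) ^ ϱ * d₁ ≤ d₂) : 2 ≤ (d₂ / d₁) ^ (1 / ϱ) := by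
  have hdiv : (2 : ℝ) ^ ϱ ≤ d₂ / d₁ := (le_div_iff₀ hd₁).mpr h
  calc (2 : ℝ) = ((2 : ℝ) ^ ϱ) ^ (1 / ϱ) := by
        rw [← rpow_mul (by norm_num), mul_one_div_cancel hϱ.ne', rpow_one]
    _ ≤ (d₂ / d₁) ^ (1 / ϱ) := rpow_le_rpow (by positivity) hdiv (by positivity)

theorem frolov_hat_delta_bounds_general (N : ℕ) (r : ℕ → ℝ) (a ϱ : ℝ)
    (hr : ∀ i ∈ Finset.Icc 1 N, 0 ≤ r i)
    (hϱ : 0 < ϱ)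
    (s₁ s₂ s₃ δ₁ δ₂ : ℝ)
    (hs₁ : s₁ = ∑ i ∈ Finset.Icc 1 N, (i : ℝ) ^ a * r i)
    (hs₂ : s₂ = ∑ i ∈ Finset.Icc 1 N, (i : ℝ) ^ (a + ϱ) * r i)
    (hs₃ : s₃ = ∑ i ∈ Finset.Icc 1 N, (i : ℝ) ^ (a + 2 * ϱ) * r i)
    (hδ₁ : δ₁ = s₂ - s₁) (hδ₂ : δ₂ = s₃ - s₂) :
    0 ≤ δ₁ ∧ 0 ≤ δ₂ ∧ (2 : ℝ) ^ ϱ * δ₁ ≤ δ₂ ∧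
    (0 < δ₁ → (2 : ℝ) ≤ (δ₂ / δ₁) ^ (1 / ϱ)) := by
  have hs : ∀ i ∈ Finset.Icc 1 N, 1 ≤ i := fun i hi => (mem_Icc.mp hi).1
  have hkey : (2 : ℝ) ^ ϱ * δ₁ ≤ δ₂ := by
    subst hs₁ hs₂ hs₃ hδ₁ hδ₂
    exact two_rpow_mul_powerMoment_sub_le hs hr hϱ.le a
  have hδ₁_nonneg : 0 ≤ δ₁ := by
    subst hs₁ hs₂ hδ₁
    exact sub_nonneg.mpr (powerMoment_mono hs hr (by linarith))
  have hδ₂_nonneg : 0 ≤ δ₂ := by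
    subst hs₂ hs₃ hδ₂
    exact sub_nonneg.mpr (powerMoment_mono hs hr (by linarith))
  exact ⟨hδ₁_nonneg, hδ₂_nonneg, hkey, fun hpos => two_le_div_rpow_one_div hϱ hpos hkey⟩

theorem frolov_hat_delta_bounds (N : ℕ) (r : ℕ → ℝ) (a ϱ : ℝ)
    (hr : ∀ i ∈ Finset.Icc 1 N, 0 ≤ r i)
    (ha : 0 < a) (hϱ : 0 < ϱ)
    (s₁ s₂ s₃ δ₁ δ₂ : ℝ)
    (hs₁ : s₁ = ∑ i ∈ Finset.Icc 1 N, (i : ℝ) ^ a * r i)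
    (hs₂ : s₂ = ∑ i ∈ Finset.Icc 1 N, (i : ℝ) ^ (a + ϱ) * r i)
    (hs₃ : s₃ = ∑ i ∈ Finset.Icc 1 N, (i : ℝ) ^ (a + 2 * ϱ) * r i)
    (hδ₁ : δ₁ = s₂ - s₁) (hδ₂ : δ₂ = s₃ - s₂) :
    0 ≤ δ₁ ∧ 0 ≤ δ₂ ∧ (2 : ℝ) ^ ϱ * δ₁ ≤ δ₂ ∧
    (0 < δ₁ → (2 : ℝ) ≤ (δ₂ / δ₁) ^ (1 / ϱ)) :=
  frolov_hat_delta_bounds_general N r a ϱ hr hϱ s₁ s₂ s₃ δ₁ δ₂ hs₁ hs₂ hs₃ hδ₁ hδ₂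
end

section
/- Let r_1,…,r_N ≥ 0 with ϱ ≥ 1 and 0 < a ≤ ϱ. Define s̄_1 = Σ i^a r_i, s̄_2 = Σ i^{a+ϱ} r_i, s̄_3 = Σ i^{a+2ϱ} r_i, δ̂_1 = s̄_2 − s̄_1, δ̂_2 = s̄_3 − s̄_2, and δ̂ = (δ̂_2/δ̂_1)^{1/ϱ}. Assume δ̂_1 > 0. Then Σ_{i=1}^N r_i ≤ s̄_1 − δ̂_1 (δ̂^a − 1)/(δ̂^a (δ̂^ϱ − 1)). -/
open Finset Real

/-!
Put `w i = i ^ a * (i ^ ϱ - 1) * r i` and `φ u = (1 - u ^ (-a / ϱ)) / (u - 1)`. Then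
`δ₁ = ∑ w i`, `δ₂ = ∑ w i * i ^ ϱ` and `s₁ - ∑ r i = ∑ w i * φ (i ^ ϱ)`; the terms with `i = 1`
vanish, so only points `i ^ ϱ > 1` occur. On `(1, ∞)` the second derivative of `φ` is a positive
multiple of the second-order Taylor remainder of `u ^ (a / ϱ + 2)` at `1`, so `φ` is convex and
Jensen's inequality gives `δ₁ * φ (δ₂ / δ₁) ≤ s₁ - ∑ r i`. Finally `δ ^ ϱ = δ₂ / δ₁`, and
`φ (δ ^ ϱ) = (δ ^ a - 1) / (δ ^ a * (δ ^ ϱ - 1))`.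
-/

theorem one_add_mul_add_sq_le_rpow_one_add {s : ℝ} (hs : 0 ≤ s) {p : ℝ} (hp : 2 ≤ p) :
    1 + p * s + p * (p - 1) / 2 * s ^ 2 ≤ (1 + s) ^ p := by
  set g : ℝ → ℝ := fun t => (1 + t) ^ p - (1 + p * t + p * (p - 1) / 2 * t ^ 2)
  have hg : ∀ t, HasDerivAt g (p * ((1 + t) ^ (p - 1) - (1 + (p - 1) * t))) t := by
    intro t
    have hid := hasDerivAt_id' t
    refine (((hid.const_add 1).rpow_const (p := p) (Or.inr (by linarith))).sub
      (((hid.const_mul p).const_add 1).add ((hid.pow 2).const_mul (p * (p - 1) / 2)))).congr_deriv ?_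
    push_cast
    ring
  have hg' : ∀ t ∈ Set.Ioi (0 : ℝ), 0 ≤ p * ((1 + t) ^ (p - 1) - (1 + (p - 1) * t)) := fun t ht =>
    mul_nonneg (by linarith)
      (sub_nonneg.2 (one_add_mul_self_le_rpow_one_add (by linarith [ht.out]) (by linarith)))
  have hmono : MonotoneOn g (Set.Ici 0) :=
    monotoneOn_of_hasDerivWithinAt_nonneg (convex_Ici 0)
      (fun t _ => (hg t).continuousAt.continuousWithinAt)
      (fun t _ => (hg t).hasDerivWithinAt) (by simpa only [interior_Ici] using hg')
  simpa [g] using hmono Set.self_mem_Ici hs hs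

noncomputable def negRpowSlope (α u : ℝ) : ℝ := (1 - u ^ (-α)) / (u - 1)

theorem convexOn_negRpowSlope {α : ℝ} (hα : 0 < α) : ConvexOn ℝ (Set.Ioi 1) (negRpowSlope α) := by
  have hd1 : ∀ x ∈ Set.Ioi (1 : ℝ), HasDerivAt (negRpowSlope α)
      ((α * x ^ (-α - 1) * (x - 1) - (1 - x ^ (-α))) / (x - 1) ^ 2) x := by
    intro x hx
    have hx0 : x ≠ 0 := by linarith [hx.out]
    refine (((hasDerivAt_rpow_const (p := -α) (Or.inl hx0)).const_sub 1).div
      ((hasDerivAt_id' x).sub_const 1) (sub_ne_zero.2 (ne_of_gt hx))).congr_deriv ?_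
    ring
  have hd2 : ∀ x ∈ Set.Ioi (1 : ℝ),
      HasDerivAt (fun u => (α * u ^ (-α - 1) * (u - 1) - (1 - u ^ (-α))) / (u - 1) ^ 2)
        (2 * x ^ (-α - 2) * (x ^ (α + 2) - (1 + (α + 2) * (x - 1)
          + (α + 2) * (α + 2 - 1) / 2 * (x - 1) ^ 2)) / (x - 1) ^ 3) x := by
    intro x hx
    have hx0 : 0 < x := by linarith [hx.out]
    have hx1 : x - 1 ≠ 0 := sub_ne_zero.2 (ne_of_gt hx)
    have hid := (hasDerivAt_id' x).sub_const 1
    refine ((((hasDerivAt_rpow_const (p := -α - 1) (Or.inl hx0.ne')).const_mul α).mul hid).sub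
      ((hasDerivAt_rpow_const (p := -α) (Or.inl hx0.ne')).const_sub 1)).div (hid.pow 2)
      (pow_ne_zero 2 hx1) |>.congr_deriv ?_
    -- every power of `x` is a multiple of `x ^ (-α - 2)`, and `x ^ (-α - 2) * x ^ (α + 2) = 1`
    have e1 : x ^ (-α - 1) = x ^ (-α - 2) * x := by
      rw [← rpow_add_one hx0.ne']; ring_nf
    have e0 : x ^ (-α) = x ^ (-α - 2) * x * x := by
      rw [← rpow_add_one hx0.ne', ← rpow_add_one hx0.ne']; ring_nf
    have e2 : x ^ (-α - 1 - 1) = x ^ (-α - 2) := by ring_nf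
    have hinv : x ^ (-α - 2) * x ^ (α + 2) = 1 := by
      rw [← rpow_add hx0]; norm_num
    simp only [Pi.mul_apply, Pi.sub_apply, Pi.pow_apply, e2, e1, e0]
    field_simp
    linear_combination (-2 * (x - 1)) * hinv
  refine convexOn_of_hasDerivWithinAt2_nonneg (convex_Ioi 1)
    (fun x hx => (hd1 x hx).continuousAt.continuousWithinAt)
    (fun x hx => by rw [interior_Ioi] at hx ⊢; exact (hd1 x hx).hasDerivWithinAt)
    (fun x hx => by rw [interior_Ioi] at hx ⊢; exact (hd2 x hx).hasDerivWithinAt) fun x hx => ?_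
  rw [interior_Ioi] at hx
  have hx1 : 0 < x - 1 := sub_pos.2 hx
  have htaylor := one_add_mul_add_sq_le_rpow_one_add hx1.le (p := α + 2) (by linarith)
  rw [add_sub_cancel] at htaylor
  have : 0 < x ^ (-α - 2) := rpow_pos_of_pos (by linarith) _
  exact div_nonneg (mul_nonneg (by positivity) (sub_nonneg.2 htaylor)) (by positivity)

theorem negRpowSlope_rpow {t : ℝ} (ht : 0 < t) (a : ℝ) {ϱ : ℝ} (hϱ : ϱ ≠ 0) :
    negRpowSlope (a / ϱ) (t ^ ϱ) = (t ^ a - 1) / (t ^ a * (t ^ ϱ - 1)) := by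
  rw [negRpowSlope, ← rpow_mul ht.le, mul_neg, mul_div_cancel₀ a hϱ, rpow_neg ht.le, ← div_div]
  field_simp

theorem ConvexOn.sum_mul_map_div_sum_le {ι : Type*} {s : Set ℝ} {f : ℝ → ℝ} (hf : ConvexOn ℝ s f)
    {t : Finset ι} {w p : ι → ℝ} (h₀ : ∀ i ∈ t, 0 ≤ w i) (h₁ : 0 < ∑ i ∈ t, w i)
    (hmem : ∀ i ∈ t, p i ∈ s) :
    (∑ i ∈ t, w i) * f ((∑ i ∈ t, w i * p i) / ∑ i ∈ t, w i) ≤ ∑ i ∈ t, w i * f (p i) := by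
  have := hf.map_centerMass_le h₀ h₁ hmem
  simp only [centerMass, smul_eq_mul, Function.comp_apply] at this
  rw [inv_mul_eq_div, inv_mul_eq_div, le_div_iff₀ h₁] at this
  linarith

theorem sum_Icc_two_eq_sum_Icc_one {M : Type*} [AddCommMonoid M] (N : ℕ) {f : ℕ → M}
    (h : f 1 = 0) : ∑ i ∈ Icc 2 N, f i = ∑ i ∈ Icc 1 N, f i :=
  sum_subset (Icc_subset_Icc_left one_le_two) fun i hi hi' => by
    obtain rfl : i = 1 := by simp only [mem_Icc] at hi hi'; omega
    exact h

noncomputable def rpowWeight (r : ℕ → ℝ) (a ϱ : ℝ) (i : ℕ) : ℝ :=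
  (i : ℝ) ^ a * ((i : ℝ) ^ ϱ - 1) * r i

theorem rpowWeight_nonneg {r : ℕ → ℝ} {i : ℕ} (hi : 1 ≤ i) (hr : 0 ≤ r i) (a : ℝ) {ϱ : ℝ}
    (hϱ : 0 ≤ ϱ) : 0 ≤ rpowWeight r a ϱ i := by
  have := sub_nonneg.2 (one_le_rpow (by exact_mod_cast hi : (1 : ℝ) ≤ i) hϱ)
  unfold rpowWeight
  positivity

theorem rpowWeight_add_self (r : ℕ → ℝ) (a ϱ : ℝ) {i : ℕ} (hi : 0 < i) :
    rpowWeight r (a + ϱ) ϱ i = rpowWeight r a ϱ i * (i : ℝ) ^ ϱ := by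
  rw [rpowWeight, rpowWeight, rpow_add (by exact_mod_cast hi)]
  ring

theorem rpowWeight_mul_negRpowSlope (r : ℕ → ℝ) (a : ℝ) {ϱ : ℝ} (hϱ : 0 < ϱ) {i : ℕ} (hi : 1 < i) :
    rpowWeight r a ϱ i * negRpowSlope (a / ϱ) ((i : ℝ) ^ ϱ) = ((i : ℝ) ^ a - 1) * r i := by
  have hi0 : (0 : ℝ) < i := by positivity
  have : (i : ℝ) ^ a ≠ 0 := (rpow_pos_of_pos hi0 a).ne'
  have : (i : ℝ) ^ ϱ - 1 ≠ 0 := sub_ne_zero.2 (one_lt_rpow (by exact_mod_cast hi) hϱ).ne'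
  rw [negRpowSlope_rpow hi0 a hϱ.ne', rpowWeight]
  field_simp

theorem sum_Icc_rpow_add_sub_sum (N : ℕ) (r : ℕ → ℝ) (b ϱ : ℝ) :
    ∑ i ∈ Icc 1 N, (i : ℝ) ^ (b + ϱ) * r i - ∑ i ∈ Icc 1 N, (i : ℝ) ^ b * r i
      = ∑ i ∈ Icc 2 N, rpowWeight r b ϱ i := by
  rw [sum_Icc_two_eq_sum_Icc_one N (by simp [rpowWeight]), ← sum_sub_distrib]
  refine sum_congr rfl fun i hi => ?_
  rw [rpowWeight, rpow_add (Nat.cast_pos.2 (by simp only [mem_Icc] at hi; omega))]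
  ring

theorem sum_Icc_rpow_sub_sum (N : ℕ) (r : ℕ → ℝ) (a : ℝ) :
    ∑ i ∈ Icc 1 N, (i : ℝ) ^ a * r i - ∑ i ∈ Icc 1 N, r i
      = ∑ i ∈ Icc 2 N, ((i : ℝ) ^ a - 1) * r i := by
  rw [sum_Icc_two_eq_sum_Icc_one N (by simp), ← sum_sub_distrib]
  exact sum_congr rfl fun i _ => by ring

theorem frolov_cor8_first_general (N : ℕ) (r : ℕ → ℝ) (a ϱ : ℝ)
    (hr : ∀ i ∈ Finset.Icc 1 N, 0 ≤ r i)
    (ha : 0 < a) (hϱ : 1 ≤ ϱ)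
    (s₁ s₂ s₃ δ₁ δ₂ δ : ℝ)
    (hs₁ : s₁ = ∑ i ∈ Finset.Icc 1 N, (i : ℝ) ^ a * r i)
    (hs₂ : s₂ = ∑ i ∈ Finset.Icc 1 N, (i : ℝ) ^ (a + ϱ) * r i)
    (hs₃ : s₃ = ∑ i ∈ Finset.Icc 1 N, (i : ℝ) ^ (a + 2 * ϱ) * r i)
    (hδ₁ : δ₁ = s₂ - s₁) (hδ₂ : δ₂ = s₃ - s₂)
    (hδ : δ = (δ₂ / δ₁) ^ (1 / ϱ))
    (hδ₁pos : 0 < δ₁) :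
    ∑ i ∈ Finset.Icc 1 N, r i
      ≤ s₁ - δ₁ * (δ ^ a - 1) / (δ ^ a * (δ ^ ϱ - 1)) := by
  have hϱ0 : 0 < ϱ := by linarith
  have h2i : ∀ i ∈ Icc 2 N, 1 < i := fun i hi => (mem_Icc.1 hi).1
  have hmem : ∀ i ∈ Icc 2 N, (i : ℝ) ^ ϱ ∈ Set.Ioi 1 := fun i hi =>
    one_lt_rpow (by exact_mod_cast h2i i hi) hϱ0
  have hw₀ : ∀ i ∈ Icc 2 N, 0 ≤ rpowWeight r a ϱ i := fun i hi =>
    rpowWeight_nonneg (h2i i hi).le (hr i (Icc_subset_Icc_left one_le_two hi)) a hϱ0.le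
  have hδ₁w : δ₁ = ∑ i ∈ Icc 2 N, rpowWeight r a ϱ i := by
    rw [hδ₁, hs₂, hs₁, sum_Icc_rpow_add_sub_sum]
  have hδ₂w : δ₂ = ∑ i ∈ Icc 2 N, rpowWeight r a ϱ i * (i : ℝ) ^ ϱ := by
    rw [hδ₂, hs₃, hs₂, two_mul, ← add_assoc, sum_Icc_rpow_add_sub_sum]
    exact sum_congr rfl fun i hi => rpowWeight_add_self r a ϱ (zero_lt_one.trans (h2i i hi))
  have hgap : s₁ - ∑ i ∈ Icc 1 N, r i
      = ∑ i ∈ Icc 2 N, rpowWeight r a ϱ i * negRpowSlope (a / ϱ) ((i : ℝ) ^ ϱ) := by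
    rw [hs₁, sum_Icc_rpow_sub_sum]
    exact sum_congr rfl fun i hi => (rpowWeight_mul_negRpowSlope r a hϱ0 (h2i i hi)).symm
  have hjensen := (convexOn_negRpowSlope (div_pos ha hϱ0)).sum_mul_map_div_sum_le hw₀
    (hδ₁w ▸ hδ₁pos) hmem
  rw [← hδ₁w, ← hδ₂w, ← hgap] at hjensen
  have hδ₁₂ : δ₁ ≤ δ₂ := hδ₁w ▸ hδ₂w ▸
    sum_le_sum fun i hi => le_mul_of_one_le_right (hw₀ i hi) (hmem i hi).out.le
  have hratio : 0 < δ₂ / δ₁ := div_pos (by linarith) hδ₁pos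
  have hδϱ : δ ^ ϱ = δ₂ / δ₁ := by
    rw [hδ, ← rpow_mul hratio.le, one_div, inv_mul_cancel₀ hϱ0.ne', rpow_one]
  rw [mul_div_assoc, ← negRpowSlope_rpow (hδ ▸ rpow_pos_of_pos hratio _) a hϱ0.ne', hδϱ]
  linarith

theorem frolov_cor8_first (N : ℕ) (r : ℕ → ℝ) (a ϱ : ℝ)
    (hr : ∀ i ∈ Finset.Icc 1 N, 0 ≤ r i)
    (ha : 0 < a) (haϱ : a ≤ ϱ) (hϱ : 1 ≤ ϱ)
    (s₁ s₂ s₃ δ₁ δ₂ δ : ℝ)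
    (hs₁ : s₁ = ∑ i ∈ Finset.Icc 1 N, (i : ℝ) ^ a * r i)
    (hs₂ : s₂ = ∑ i ∈ Finset.Icc 1 N, (i : ℝ) ^ (a + ϱ) * r i)
    (hs₃ : s₃ = ∑ i ∈ Finset.Icc 1 N, (i : ℝ) ^ (a + 2 * ϱ) * r i)
    (hδ₁ : δ₁ = s₂ - s₁) (hδ₂ : δ₂ = s₃ - s₂)
    (hδ : δ = (δ₂ / δ₁) ^ (1 / ϱ))
    (hδ₁pos : 0 < δ₁) :
    ∑ i ∈ Finset.Icc 1 N, r i
      ≤ s₁ - δ₁ * (δ ^ a - 1) / (δ ^ a * (δ ^ ϱ - 1)) :=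
  frolov_cor8_first_general N r a ϱ hr ha hϱ s₁ s₂ s₃ δ₁ δ₂ δ hs₁ hs₂ hs₃ hδ₁ hδ₂ hδ hδ₁pos
end

section
/- Let r_1,…,r_N ≥ 0. Define s_1 = Σ i·r_i, s_2 = Σ i²·r_i, s_3 = Σ i³·r_i, δ̂_1 = s_2 − s_1, δ̂_2 = s_3 − s_2. Then Σ_{i=1}^N r_i ≤ s_1 − δ̂_1²/δ̂_2 (with the convention 0/0 = 0). -/
/-!
With the weights `wᵢ = (i - 1) rᵢ ≥ 0` one has `∑ rᵢ = s₁ - ∑ wᵢ`, `δ̂₁ = ∑ i wᵢ` and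
`δ̂₂ = ∑ i² wᵢ`, so the claim is the weighted Cauchy–Schwarz inequality
`(∑ i wᵢ)² ≤ (∑ wᵢ) (∑ i² wᵢ)`.
-/

open Finset

namespace Finset

variable {ι R : Type*} [Field R] [LinearOrder R] [IsStrictOrderedRing R]

/-- Weighted Cauchy–Schwarz, in a form that also holds when the denominator vanishes. -/
theorem sq_sum_mul_div_sum_mul_sq_le_sum (s : Finset ι) {w : ι → R} (x : ι → R)
    (hw : ∀ i ∈ s, 0 ≤ w i) :
    (∑ i ∈ s, w i * x i) ^ 2 / ∑ i ∈ s, w i * x i ^ 2 ≤ ∑ i ∈ s, w i := by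
  have hwx : ∀ i ∈ s, 0 ≤ w i * x i ^ 2 := fun i hi => mul_nonneg (hw i hi) (sq_nonneg _)
  refine div_le_of_le_mul₀ (sum_nonneg hwx) (sum_nonneg hw) ?_
  exact sum_sq_le_sum_mul_sum_of_sq_le_mul s hw hwx fun i _ => by rw [mul_pow, sq (w i), mul_assoc]

end Finset

theorem frolov_cor_upper (N : ℕ) (r : ℕ → ℝ)
    (hr : ∀ i ∈ Finset.Icc 1 N, 0 ≤ r i)
    (s₁ s₂ s₃ δ₁ δ₂ : ℝ)
    (hs₁ : s₁ = ∑ i ∈ Finset.Icc 1 N, (i : ℝ) * r i)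
    (hs₂ : s₂ = ∑ i ∈ Finset.Icc 1 N, (i : ℝ) ^ 2 * r i)
    (hs₃ : s₃ = ∑ i ∈ Finset.Icc 1 N, (i : ℝ) ^ 3 * r i)
    (hδ₁ : δ₁ = s₂ - s₁) (hδ₂ : δ₂ = s₃ - s₂) :
    ∑ i ∈ Finset.Icc 1 N, r i ≤ s₁ - δ₁ ^ 2 / δ₂ := by
  set w : ℕ → ℝ := fun i => ((i : ℝ) - 1) * r i
  have hw : ∀ i ∈ Icc 1 N, 0 ≤ w i := fun i hi =>
    mul_nonneg (sub_nonneg.2 (by exact_mod_cast (mem_Icc.1 hi).1)) (hr i hi)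
  have hsum : ∑ i ∈ Icc 1 N, r i = s₁ - ∑ i ∈ Icc 1 N, w i := by
    rw [hs₁, ← sum_sub_distrib]
    exact sum_congr rfl fun i _ => by ring
  have hδ₁' : δ₁ = ∑ i ∈ Icc 1 N, w i * i := by
    rw [hδ₁, hs₂, hs₁, ← sum_sub_distrib]
    exact sum_congr rfl fun i _ => by ring
  have hδ₂' : δ₂ = ∑ i ∈ Icc 1 N, w i * (i : ℝ) ^ 2 := by
    rw [hδ₂, hs₃, hs₂, ← sum_sub_distrib]
    exact sum_congr rfl fun i _ => by ring
  have hCS := sq_sum_mul_div_sum_mul_sq_le_sum (Icc 1 N) (fun i : ℕ => (i : ℝ)) hw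
  rw [← hδ₁', ← hδ₂'] at hCS
  linarith
end

section
/- (de Caen's inequality) Let A_1,…,A_N be events in a probability space. Then P(∪_{k=1}^N A_k) ≥ Σ_{k=1}^N P(A_k)² / (Σ_{i=1}^N P(A_i ∩ A_k)), with the convention that a summand with P(A_k) = 0 is 0. -/
/-!
Let `M ω` be the number of events containing `ω`. On `A k` we have `M ≥ 1`, and Cauchy–Schwarz
gives `P(A k)² ≤ (∫_{A k} M) (∫_{A k} 1/M)`, where `∫_{A k} M = ∑ i, P(A i ∩ A k)`. Summing the
bounds `∫_{A k} 1/M` over `k` gives `∫ M · (1/M) = P(⋃ k, A k)`.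
-/

open Finset MeasureTheory

lemma sq_measureReal_univ_div_integral_le_integral_inv {Ω : Type*} [MeasurableSpace Ω]
    {ν : Measure Ω} [IsFiniteMeasure ν] {g : Ω → ℝ} (hg : ∀ᵐ ω ∂ν, 0 < g ω)
    (hg_int : Integrable g ν) (hg_inv : Integrable (fun ω => (g ω)⁻¹) ν) :
    ν.real Set.univ ^ 2 / ∫ ω, g ω ∂ν ≤ ∫ ω, (g ω)⁻¹ ∂ν := by
  set a := ∫ ω, g ω ∂ν
  set b := ν.real Set.univ
  -- Integrate `2t - t²g ≤ 1/g` at the optimal `t = b/a`; as `b/0 = 0`, this also covers `a = 0`.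
  set t := b / a
  have hpoint : ∀ᵐ ω ∂ν, 2 * t - t ^ 2 * g ω ≤ (g ω)⁻¹ := by
    filter_upwards [hg] with ω hω
    have hsq : (g ω)⁻¹ - (2 * t - t ^ 2 * g ω) = (t * g ω - 1) ^ 2 / g ω := by
      field_simp
      ring
    exact sub_nonneg.1 (hsq ▸ by positivity)
  calc b ^ 2 / a = ∫ ω, (2 * t - t ^ 2 * g ω) ∂ν := by
        rw [integral_sub (integrable_const _) (hg_int.const_mul _), integral_const,
          integral_const_mul]
        rcases eq_or_ne a 0 with ha | ha
        · simp [t, ha]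
        · simp only [smul_eq_mul, t]
          field_simp
          ring
    _ ≤ ∫ ω, (g ω)⁻¹ ∂ν :=
        integral_mono_ae ((integrable_const _).sub (hg_int.const_mul _)) hg_inv hpoint

section OverlapCount

variable {Ω ι : Type*} {s : Finset ι} {A : ι → Set Ω}

noncomputable def overlapCount (s : Finset ι) (A : ι → Set Ω) (ω : Ω) : ℝ :=
  ∑ i ∈ s, (A i).indicator 1 ω

lemma one_le_overlapCount {i : ι} {ω : Ω} (hi : i ∈ s) (hω : ω ∈ A i) :
    1 ≤ overlapCount s A ω :=
  calc (1 : ℝ) = (A i).indicator 1 ω := by simp [hω]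
    _ ≤ overlapCount s A ω :=
      single_le_sum (fun j _ => Set.indicator_nonneg (fun _ _ => zero_le_one) ω) hi

lemma overlapCount_eq_zero_of_notMem {ω : Ω} (hω : ω ∉ ⋃ i ∈ s, A i) :
    overlapCount s A ω = 0 := by
  simp only [Set.mem_iUnion, not_exists] at hω
  exact sum_eq_zero fun i hi => Set.indicator_of_notMem (hω i hi) _

lemma overlapCount_mul_inv (ω : Ω) :
    overlapCount s A ω * (overlapCount s A ω)⁻¹ = (⋃ i ∈ s, A i).indicator 1 ω := by
  by_cases hω : ω ∈ ⋃ i ∈ s, A i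
  · obtain ⟨i, hi, hωi⟩ := Set.mem_iUnion₂.1 hω
    have := one_le_overlapCount hi hωi
    rw [mul_inv_cancel₀ (by positivity), Set.indicator_of_mem hω, Pi.one_apply]
  · simp [overlapCount_eq_zero_of_notMem hω, hω]

lemma abs_inv_overlapCount_le_one (ω : Ω) : |(overlapCount s A ω)⁻¹| ≤ 1 := by
  by_cases hω : ω ∈ ⋃ i ∈ s, A i
  · obtain ⟨i, hi, hωi⟩ := Set.mem_iUnion₂.1 hω
    have := one_le_overlapCount hi hωi
    rw [abs_of_pos (by positivity)]
    exact inv_le_one_of_one_le₀ this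
  · simp [overlapCount_eq_zero_of_notMem hω]

variable [MeasurableSpace Ω]

lemma measurable_overlapCount (hA : ∀ i, MeasurableSet (A i)) :
    Measurable (overlapCount s A) :=
  Finset.measurable_fun_sum s fun i _ => measurable_one.indicator (hA i)

variable {μ : Measure Ω} [IsFiniteMeasure μ]

lemma integrable_overlapCount (hA : ∀ i, MeasurableSet (A i)) :
    Integrable (overlapCount s A) μ :=
  integrable_finsetSum s fun i _ => (integrable_const 1).indicator (hA i)

lemma integrable_inv_overlapCount (hA : ∀ i, MeasurableSet (A i)) :
    Integrable (fun ω => (overlapCount s A ω)⁻¹) μ :=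
  .of_bound (measurable_overlapCount hA).inv.aestronglyMeasurable 1
    (.of_forall abs_inv_overlapCount_le_one)

lemma setIntegral_overlapCount (hA : ∀ i, MeasurableSet (A i)) (k : ι) :
    ∫ ω in A k, overlapCount s A ω ∂μ = ∑ i ∈ s, μ.real (A i ∩ A k) := by
  unfold overlapCount
  rw [integral_finsetSum s fun i _ => (integrable_const 1).indicator (hA i)]
  refine sum_congr rfl fun i _ => ?_
  rw [integral_indicator_one (hA i), measureReal_restrict_apply (hA i)]

lemma sum_setIntegral_inv_overlapCount (hA : ∀ i, MeasurableSet (A i)) :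
    ∑ k ∈ s, ∫ ω in A k, (overlapCount s A ω)⁻¹ ∂μ = μ.real (⋃ k ∈ s, A k) := by
  simp_rw [← integral_indicator (hA _)]
  rw [← integral_finsetSum s fun k _ => (integrable_inv_overlapCount hA).indicator (hA k),
    ← integral_indicator_one (s.measurableSet_biUnion fun k _ => hA k)]
  congr 1 with ω
  rw [← overlapCount_mul_inv, overlapCount, sum_mul]
  refine sum_congr rfl fun k _ => ?_
  by_cases hω : ω ∈ A k <;> simp [hω, overlapCount]

end OverlapCount

theorem de_caen_inequality (Ω : Type*) [MeasurableSpace Ω]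
    (P : Measure Ω) [IsProbabilityMeasure P]
    (N : ℕ) (A : ℕ → Set Ω) (hA : ∀ k, MeasurableSet (A k)) :
    (P (⋃ k ∈ Finset.Icc 1 N, A k)).toReal
      ≥ ∑ k ∈ Finset.Icc 1 N,
          (P (A k)).toReal ^ 2 / ∑ i ∈ Finset.Icc 1 N, (P (A i ∩ A k)).toReal := by
  set s := Finset.Icc 1 N
  calc ∑ k ∈ s, P.real (A k) ^ 2 / ∑ i ∈ s, P.real (A i ∩ A k)
      ≤ ∑ k ∈ s, ∫ ω in A k, (overlapCount s A ω)⁻¹ ∂P := by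
        refine sum_le_sum fun k hk => ?_
        rw [← setIntegral_overlapCount hA, ← measureReal_restrict_apply_univ]
        refine sq_measureReal_univ_div_integral_le_integral_inv
          ((ae_restrict_iff' (hA k)).2 (.of_forall fun ω hω => ?_))
          (integrable_overlapCount hA).restrict (integrable_inv_overlapCount hA).restrict
        exact zero_lt_one.trans_le (one_le_overlapCount hk hω)
    _ = P.real (⋃ k ∈ s, A k) := sum_setIntegral_inv_overlapCount hA
end

section
/- Let A_1,…,A_N be events, ξ = Σ_{i=1}^N 1_{A_i}, η = N − ξ. Then P(∪_{k=1}^N A_k) ≥ (1/N) Σ_{k=1}^N [ (E[η·1_{A_k}])² / E[η·ξ·1_{A_k}] + P(A_k) ], with the convention 0/0 = 0. -/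
open Finset MeasureTheory

/-!
Let `ξ` count the events that occur and `η = N - ξ`, so `ξ ≥ 1` on each `A k`. Cauchy–Schwarz in the
square-root-free form `(∫ a)² ≤ ∫ b · ∫ c` for `a² ≤ b c` (the discriminant of
`t ↦ ∫ (b t² - 2 a t + c) ≥ 0`), with `a = η 1_{A k}`, `b = ηξ 1_{A k}`, `c = (η/ξ) 1_{A k}`, gives
`E[η 1_{A k}]² / E[ηξ 1_{A k}] ≤ E[(η/ξ) 1_{A k}]`. Adding `P(A k) = E[1_{A k}]` and summing over `k`
leaves the expectation of `∑ₖ (η/ξ + 1) 1_{A k} = (N/ξ) ξ`, which is `N` on `⋃ₖ A k` and `0` off it.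
-/

lemma quadratic_nonneg_of_sq_le_mul {a b c : ℝ} (hb : 0 ≤ b) (hc : 0 ≤ c) (habc : a ^ 2 ≤ b * c)
    (t : ℝ) : 0 ≤ b * (t * t) + -2 * a * t + c := by
  rcases hb.eq_or_lt with rfl | hb_pos
  · have ha : a = 0 := by nlinarith
    simpa [ha] using hc
  · nlinarith [sq_nonneg (b * t - a)]

theorem sq_integral_div_integral_le_integral {Ω : Type*} [MeasurableSpace Ω] {μ : Measure Ω}
    {a b c : Ω → ℝ} (hb : ∀ ω, 0 ≤ b ω) (hc : ∀ ω, 0 ≤ c ω) (habc : ∀ ω, a ω ^ 2 ≤ b ω * c ω)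
    (ha_int : Integrable a μ) (hb_int : Integrable b μ) (hc_int : Integrable c μ) :
    (∫ ω, a ω ∂μ) ^ 2 / ∫ ω, b ω ∂μ ≤ ∫ ω, c ω ∂μ := by
  have hquad (t : ℝ) : 0 ≤ (∫ ω, b ω ∂μ) * (t * t) + -2 * (∫ ω, a ω ∂μ) * t + ∫ ω, c ω ∂μ := by
    have hb_t : Integrable (fun ω => b ω * (t * t)) μ := hb_int.mul_const _
    have ha_t : Integrable (fun ω => -2 * a ω * t) μ := (ha_int.const_mul _).mul_const _
    have hba_t : Integrable (fun ω => b ω * (t * t) + -2 * a ω * t) μ := hb_t.add ha_t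
    have hint : ∫ ω, (b ω * (t * t) + -2 * a ω * t + c ω) ∂μ
        = (∫ ω, b ω ∂μ) * (t * t) + -2 * (∫ ω, a ω ∂μ) * t + ∫ ω, c ω ∂μ := by
      rw [integral_add hba_t hc_int, integral_add hb_t ha_t,
        integral_mul_const, integral_mul_const, integral_const_mul]
    exact hint ▸ integral_nonneg fun ω => quadratic_nonneg_of_sq_le_mul (hb ω) (hc ω) (habc ω) t
  have hdisc := discrim_le_zero hquad
  rw [discrim] at hdisc
  exact div_le_of_le_mul₀ (integral_nonneg hb) (integral_nonneg hc) (by linarith)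

section OccurrenceCount

variable {Ω ι : Type*} (s : Finset ι) (A : ι → Set Ω)

noncomputable def occurrenceCount (ω : Ω) : ℝ := ∑ i ∈ s, (A i).indicator (fun _ => (1 : ℝ)) ω

lemma occurrenceCount_nonneg (ω : Ω) : 0 ≤ occurrenceCount s A ω :=
  sum_nonneg fun _ _ => Set.indicator_nonneg (fun _ _ => zero_le_one) ω

lemma occurrenceCount_le_card (ω : Ω) : occurrenceCount s A ω ≤ s.card := by
  simpa [occurrenceCount] using
    sum_le_card_nsmul s (fun i => (A i).indicator (fun _ => (1 : ℝ)) ω) 1 fun i _ => Set.indicator_le_self' (fun _ _ => zero_le_one) ω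

lemma one_le_occurrenceCount {k : ι} (hk : k ∈ s) {ω : Ω} (hω : ω ∈ A k) :
    1 ≤ occurrenceCount s A ω :=
  calc (1 : ℝ) = (A k).indicator (fun _ => 1) ω := (Set.indicator_of_mem hω (fun _ => (1 : ℝ))).symm
    _ ≤ occurrenceCount s A ω :=
      single_le_sum (fun _ _ => Set.indicator_nonneg (fun _ _ => zero_le_one) ω) hk

lemma occurrenceCount_eq_zero {ω : Ω} (hω : ω ∉ ⋃ k ∈ s, A k) : occurrenceCount s A ω = 0 :=
  sum_eq_zero fun _ hi => Set.indicator_of_notMem (fun h => hω (Set.mem_biUnion hi h)) _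

lemma measurable_occurrenceCount [MeasurableSpace Ω] (hA : ∀ i, MeasurableSet (A i)) :
    Measurable (occurrenceCount s A) :=
  Finset.measurable_sum s fun i _ => measurable_const.indicator (hA i)

lemma sum_div_occurrenceCount_mul_indicator (x : ℝ) (ω : Ω) :
    ∑ k ∈ s, x / occurrenceCount s A ω * (A k).indicator (fun _ => 1) ω
      = x * (⋃ k ∈ s, A k).indicator (fun _ => 1) ω := by
  rw [← mul_sum]
  by_cases hω : ω ∈ ⋃ k ∈ s, A k
  · obtain ⟨k, hk, hωk⟩ := Set.mem_iUnion₂.mp hω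
    have hpos := zero_lt_one.trans_le (one_le_occurrenceCount s A hk hωk)
    rw [Set.indicator_of_mem hω, mul_one]
    exact div_mul_cancel₀ x hpos.ne'
  · change x / occurrenceCount s A ω * occurrenceCount s A ω = _
    rw [Set.indicator_of_notMem hω, occurrenceCount_eq_zero s A hω]
    simp

lemma sum_card_sub_occurrenceCount_div_mul_indicator_add_indicator (ω : Ω) :
    ∑ k ∈ s, ((s.card - occurrenceCount s A ω) / occurrenceCount s A ω
        * (A k).indicator (fun _ => 1) ω + (A k).indicator (fun _ => 1) ω)
      = s.card * (⋃ k ∈ s, A k).indicator (fun _ => 1) ω := by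
  rw [← sum_div_occurrenceCount_mul_indicator s A s.card ω]
  refine sum_congr rfl fun k hk => ?_
  by_cases hω : ω ∈ A k
  · have hpos := zero_lt_one.trans_le (one_le_occurrenceCount s A hk hω)
    rw [Set.indicator_of_mem hω, mul_one, mul_one, div_add_one hpos.ne', sub_add_cancel]
  · simp [Set.indicator_of_notMem hω]

end OccurrenceCount

section Expectations

variable {Ω ι : Type*} [MeasurableSpace Ω] {μ : Measure Ω} [IsFiniteMeasure μ]
  {s : Finset ι} {A : ι → Set Ω}

lemma integrable_mul_indicator_of_abs_le {f : Ω → ℝ} {S : Set Ω} (hf : Measurable f)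
    (hS : MeasurableSet S) {C : ℝ} (hC : ∀ ω ∈ S, |f ω| ≤ C) :
    Integrable (fun ω => f ω * S.indicator (fun _ => (1 : ℝ)) ω) μ := by
  refine Integrable.of_bound (hf.mul (measurable_const.indicator hS)).aestronglyMeasurable
    (max C 0) (ae_of_all _ fun ω => ?_)
  by_cases hω : ω ∈ S
  · rw [Set.indicator_of_mem hω, mul_one, Real.norm_eq_abs]
    exact le_max_of_le_left (hC ω hω)
  · simp [Set.indicator_of_notMem hω]

lemma integrable_card_sub_occurrenceCount_div_mul_indicator (hA : ∀ i, MeasurableSet (A i))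
    {k : ι} (hk : k ∈ s) :
    Integrable (fun ω => (s.card - occurrenceCount s A ω) / occurrenceCount s A ω
      * (A k).indicator (fun _ => (1 : ℝ)) ω) μ := by
  have hξ := measurable_occurrenceCount s A hA
  refine integrable_mul_indicator_of_abs_le ((measurable_const.sub hξ).div hξ) (hA k)
    (C := s.card) fun ω hω => ?_
  have hη_nonneg := sub_nonneg.2 (occurrenceCount_le_card s A ω)
  rw [abs_of_nonneg (div_nonneg hη_nonneg (occurrenceCount_nonneg s A ω))]
  exact (div_le_self hη_nonneg (one_le_occurrenceCount s A hk hω)).trans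
    (sub_le_self _ (occurrenceCount_nonneg s A ω))

lemma sq_integral_div_integral_le_integral_card_sub_occurrenceCount_div
    (hA : ∀ i, MeasurableSet (A i)) {k : ι} (hk : k ∈ s) :
    (∫ ω, (s.card - occurrenceCount s A ω) * (A k).indicator (fun _ => (1 : ℝ)) ω ∂μ) ^ 2
        / (∫ ω, (s.card - occurrenceCount s A ω) * occurrenceCount s A ω
            * (A k).indicator (fun _ => (1 : ℝ)) ω ∂μ)
      ≤ ∫ ω, (s.card - occurrenceCount s A ω) / occurrenceCount s A ω
          * (A k).indicator (fun _ => (1 : ℝ)) ω ∂μ := by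
  set ξ := occurrenceCount s A
  set n : ℝ := (s.card : ℝ)
  have hξ_meas : Measurable ξ := measurable_occurrenceCount s A hA
  have hξ_nonneg (ω : Ω) : 0 ≤ ξ ω := occurrenceCount_nonneg s A ω
  have hη_nonneg (ω : Ω) : 0 ≤ n - ξ ω := sub_nonneg.2 (occurrenceCount_le_card s A ω)
  have hη_le (ω : Ω) : n - ξ ω ≤ n := sub_le_self _ (hξ_nonneg ω)
  have hind_nonneg (ω : Ω) : 0 ≤ (A k).indicator (fun _ => (1 : ℝ)) ω :=
    Set.indicator_nonneg (fun _ _ => zero_le_one) ω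
  refine sq_integral_div_integral_le_integral
    (fun ω => mul_nonneg (mul_nonneg (hη_nonneg ω) (hξ_nonneg ω)) (hind_nonneg ω))
    (fun ω => mul_nonneg (div_nonneg (hη_nonneg ω) (hξ_nonneg ω)) (hind_nonneg ω))
    (fun ω => ?_)
    (integrable_mul_indicator_of_abs_le (measurable_const.sub hξ_meas) (hA k) (C := n)
      fun ω _ => by rw [abs_of_nonneg (hη_nonneg ω)]; exact hη_le ω)
    (integrable_mul_indicator_of_abs_le ((measurable_const.sub hξ_meas).mul hξ_meas) (hA k)
      (C := n * n) fun ω _ => ?_)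
    (integrable_card_sub_occurrenceCount_div_mul_indicator hA hk)
  · by_cases hω : ω ∈ A k
    · have hξ_ne : ξ ω ≠ 0 := (zero_lt_one.trans_le (one_le_occurrenceCount s A hk hω)).ne'
      simp only [Set.indicator_of_mem hω, mul_one]
      rw [mul_assoc, mul_div_cancel₀ _ hξ_ne, sq]
    · simp [Set.indicator_of_notMem hω]
  · rw [abs_of_nonneg (mul_nonneg (hη_nonneg ω) (hξ_nonneg ω))]
    exact mul_le_mul (hη_le ω) (occurrenceCount_le_card s A ω) (hξ_nonneg ω) (by positivity)

theorem sum_sq_integral_div_add_measure_le_card_mul_measure_biUnion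
    (hA : ∀ i, MeasurableSet (A i)) :
    ∑ k ∈ s, ((∫ ω, (s.card - occurrenceCount s A ω) * (A k).indicator (fun _ => (1 : ℝ)) ω ∂μ) ^ 2
        / (∫ ω, (s.card - occurrenceCount s A ω) * occurrenceCount s A ω
            * (A k).indicator (fun _ => (1 : ℝ)) ω ∂μ)
        + (μ (A k)).toReal)
      ≤ s.card * (μ (⋃ k ∈ s, A k)).toReal := by
  set ξ := occurrenceCount s A
  set n : ℝ := (s.card : ℝ)
  set ind : ι → Ω → ℝ := fun k => (A k).indicator (fun _ => 1)
  have hind_int (k : ι) : Integrable (ind k) μ := (integrable_const 1).indicator (hA k)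
  have hc_int {k : ι} (hk : k ∈ s) : Integrable (fun ω => (n - ξ ω) / ξ ω * ind k ω) μ :=
    integrable_card_sub_occurrenceCount_div_mul_indicator hA hk
  calc ∑ k ∈ s, ((∫ ω, (n - ξ ω) * ind k ω ∂μ) ^ 2 / (∫ ω, (n - ξ ω) * ξ ω * ind k ω ∂μ)
        + (μ (A k)).toReal)
      ≤ ∑ k ∈ s, ((∫ ω, (n - ξ ω) / ξ ω * ind k ω ∂μ) + ∫ ω, ind k ω ∂μ) :=
        sum_le_sum fun k hk => add_le_add
          (sq_integral_div_integral_le_integral_card_sub_occurrenceCount_div hA hk)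
          (integral_indicator_one (hA k)).ge
    _ = ∫ ω, ∑ k ∈ s, ((n - ξ ω) / ξ ω * ind k ω + ind k ω) ∂μ := by
        rw [integral_finsetSum s (f := fun k ω => (n - ξ ω) / ξ ω * ind k ω + ind k ω)
          fun k hk => (hc_int hk).add (hind_int k)]
        exact sum_congr rfl fun k hk => (integral_add (hc_int hk) (hind_int k)).symm
    _ = n * (μ (⋃ k ∈ s, A k)).toReal := by
        have hsum (ω : Ω) : ∑ k ∈ s, ((n - ξ ω) / ξ ω * ind k ω + ind k ω)
            = n * (⋃ k ∈ s, A k).indicator (fun _ => 1) ω :=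
          sum_card_sub_occurrenceCount_div_mul_indicator_add_indicator s A ω
        simp_rw [hsum]
        rw [integral_const_mul]
        exact congrArg (n * ·) (integral_indicator_one (measurableSet_biUnion _ fun k _ => hA k))

end Expectations

theorem frolov_cor10 (Ω : Type*) [MeasurableSpace Ω]
    (P : Measure Ω) [IsProbabilityMeasure P]
    (N : ℕ) (A : ℕ → Set Ω) (hA : ∀ k, MeasurableSet (A k))
    (ξ η : Ω → ℝ)
    (hξ : ∀ ω, ξ ω = ∑ i ∈ Finset.Icc 1 N, Set.indicator (A i) (fun _ => (1 : ℝ)) ω)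
    (hη : ∀ ω, η ω = N - ξ ω) :
    (P (⋃ k ∈ Finset.Icc 1 N, A k)).toReal
      ≥ (1 / (N : ℝ)) * ∑ k ∈ Finset.Icc 1 N,
          ((∫ ω, η ω * Set.indicator (A k) (fun _ => (1 : ℝ)) ω ∂P) ^ 2
              / (∫ ω, η ω * ξ ω * Set.indicator (A k) (fun _ => (1 : ℝ)) ω ∂P)
            + (P (A k)).toReal) := by
  rcases N.eq_zero_or_pos with rfl | hN
  · simp
  obtain rfl : ξ = occurrenceCount (Icc 1 N) A := funext hξ
  obtain rfl : η = fun ω => (N : ℝ) - occurrenceCount (Icc 1 N) A ω := funext hη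
  have key :=
    sum_sq_integral_div_add_measure_le_card_mul_measure_biUnion (μ := P) (s := Icc 1 N) hA
  rw [Nat.card_Icc, Nat.add_sub_cancel] at key
  rw [ge_iff_le, one_div, inv_mul_le_iff₀ (by positivity)]
  exact key
end

section
/- Let A_1,…,A_N be events, ξ = Σ_{i=1}^N 1_{A_i}. Then P(∪_{k=1}^N A_k) ≤ Σ_{k=1}^N [ P(A_k) − (E[(ξ−1)·1_{A_k}])² / E[ξ(ξ−1)·1_{A_k}] ], with the convention 0/0 = 0. -/
/-! Since `ξ = ∑ 1_{A_k}` is at least `1` on the union and vanishes off it,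
`1_{⋃ A_k} = ∑ₖ 1_{A_k} / ξ`, hence
`P(⋃ A_k) = ∑ₖ E[1_{A_k} / ξ] = ∑ₖ (P(A_k) - E[(1 - 1/ξ) 1_{A_k}])`.
On `A_k` we have `(ξ - 1)² = (1 - 1/ξ) · ξ(ξ - 1)` with both factors nonnegative, so
Cauchy–Schwarz bounds `E[(ξ - 1) 1_{A_k}]²` by `E[(1 - 1/ξ) 1_{A_k}] · E[ξ(ξ - 1) 1_{A_k}]`;
when the last expectation is `0` so is the left side, which makes `0/0 = 0` harmless. -/

open Finset MeasureTheory

section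

variable {α : Type*} [MeasurableSpace α] {μ : Measure α}

theorem quadratic_nonneg_of_sq_le_mul_s17 {x g y : ℝ} (hg : 0 ≤ g) (hy : 0 ≤ y)
    (h : x ^ 2 ≤ g * y) (t : ℝ) : 0 ≤ y * (t * t) + -2 * x * t + g := by
  rcases hg.eq_or_lt with rfl | hg
  · have hx : x = 0 := by nlinarith
    subst hx
    simpa using mul_nonneg hy (mul_self_nonneg t)
  · -- `g (y t² - 2 x t + g) = (g - x t)² + t² (g y - x²)`
    have : 0 ≤ g * (y * (t * t) + -2 * x * t + g) := by
      nlinarith [sq_nonneg (g - x * t), mul_nonneg (sq_nonneg t) (sub_nonneg.2 h)]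
    exact nonneg_of_mul_nonneg_right (by linarith) hg

theorem sq_integral_le_integral_mul_integral {X G Y : α → ℝ}
    (hX : Integrable X μ) (hG : Integrable G μ) (hY : Integrable Y μ)
    (hG0 : 0 ≤ᵐ[μ] G) (hY0 : 0 ≤ᵐ[μ] Y) (hXGY : ∀ᵐ a ∂μ, X a ^ 2 ≤ G a * Y a) :
    (∫ a, X a ∂μ) ^ 2 ≤ (∫ a, G a ∂μ) * ∫ a, Y a ∂μ := by
  have hquad : ∀ t : ℝ,
      0 ≤ (∫ a, Y a ∂μ) * (t * t) + -2 * (∫ a, X a ∂μ) * t + ∫ a, G a ∂μ := fun t => by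
    have := integral_nonneg_of_ae <| by
      filter_upwards [hG0, hY0, hXGY] with a hGa hYa ha
      exact quadratic_nonneg_of_sq_le_mul_s17 hGa hYa ha t
    have hYt : Integrable (fun a => Y a * (t * t)) μ := hY.mul_const _
    have hXt : Integrable (fun a => -2 * X a * t) μ := (hX.const_mul _).mul_const _
    have hYXt : Integrable (fun a => Y a * (t * t) + -2 * X a * t) μ := hYt.add hXt
    rwa [integral_add hYXt hG, integral_add hYt hXt, integral_mul_const,
      integral_mul_const, integral_const_mul] at this
  have := discrim_le_zero hquad
  rw [discrim] at this
  nlinarith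

theorem integrable_inv_of_one_le [IsFiniteMeasure μ] {ξ : α → ℝ}
    (hξ : AEMeasurable ξ μ) (h1 : ∀ᵐ a ∂μ, 1 ≤ ξ a) : Integrable (fun a => (ξ a)⁻¹) μ :=
  Integrable.of_bound hξ.inv.aestronglyMeasurable 1 <| by
    filter_upwards [h1] with a ha
    rw [norm_inv, Real.norm_of_nonneg (by linarith)]
    exact inv_le_one_of_one_le₀ ha

theorem integral_mul_indicator_one {s : Set α} (hs : MeasurableSet s) (f : α → ℝ) :
    ∫ a, f a * s.indicator (fun _ => (1 : ℝ)) a ∂μ = ∫ a in s, f a ∂μ := by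
  simp_rw [← Set.indicator_mul_right _ f, mul_one]
  exact integral_indicator hs

theorem integral_inv_le_measureReal_sub_of_one_le [IsFiniteMeasure μ] {ξ : α → ℝ}
    (hξ : Integrable ξ μ) (hξ2 : Integrable (fun a => ξ a ^ 2) μ) (h1 : ∀ᵐ a ∂μ, 1 ≤ ξ a) :
    ∫ a, (ξ a)⁻¹ ∂μ
      ≤ μ.real Set.univ - (∫ a, ξ a - 1 ∂μ) ^ 2 / ∫ a, ξ a * (ξ a - 1) ∂μ := by
  have hinv := integrable_inv_of_one_le hξ.aemeasurable h1
  have hG : Integrable (fun a => 1 - (ξ a)⁻¹) μ := (integrable_const 1).sub hinv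
  have hY : Integrable (fun a => ξ a * (ξ a - 1)) μ := by
    refine (hξ2.sub hξ).congr (ae_of_all _ fun a => ?_)
    simp only [Pi.sub_apply]
    ring
  have hG0 : ∀ᵐ a ∂μ, 0 ≤ 1 - (ξ a)⁻¹ := by
    filter_upwards [h1] with a ha
    linarith [inv_le_one_of_one_le₀ ha]
  have hY0 : ∀ᵐ a ∂μ, 0 ≤ ξ a * (ξ a - 1) := by
    filter_upwards [h1] with a ha
    nlinarith
  have hXGY : ∀ᵐ a ∂μ, (ξ a - 1) ^ 2 ≤ (1 - (ξ a)⁻¹) * (ξ a * (ξ a - 1)) := by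
    filter_upwards [h1] with a ha
    have : ξ a ≠ 0 := by positivity
    exact le_of_eq (by field_simp)
  have hCS := sq_integral_le_integral_mul_integral (hξ.sub (integrable_const 1)) hG hY
    hG0 hY0 hXGY
  have hsplit : ∫ a, (ξ a)⁻¹ ∂μ = μ.real Set.univ - ∫ a, 1 - (ξ a)⁻¹ ∂μ := by
    rw [integral_sub (integrable_const 1) hinv, integral_const, smul_eq_mul, mul_one]
    ring
  rw [hsplit, sub_le_sub_iff_left]
  exact div_le_of_le_mul₀ (integral_nonneg_of_ae hY0) (integral_nonneg_of_ae hG0) hCS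

end

section CountingFunction

variable {Ω ι : Type*} {s : Finset ι} {A : ι → Set Ω}
  {ξ : Ω → ℝ} (hξ : ∀ ω, ξ ω = ∑ i ∈ s, (A i).indicator (fun _ => (1 : ℝ)) ω)
include hξ

theorem one_le_of_mem_of_sum_indicator {i : ι} (hi : i ∈ s) {ω : Ω} (hω : ω ∈ A i) :
    1 ≤ ξ ω := by
  rw [hξ]
  refine le_of_eq_of_le ?_
    (single_le_sum (fun j _ => Set.indicator_nonneg (fun _ _ => zero_le_one) ω) hi)
  rw [Set.indicator_of_mem hω]

theorem abs_le_card_of_sum_indicator (ω : Ω) : |ξ ω| ≤ #s := by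
  have h01 : ∀ i, (A i).indicator (fun _ => (1 : ℝ)) ω ∈ Set.Icc 0 1 := fun i => by
    unfold Set.indicator
    split_ifs <;> norm_num
  rw [hξ, abs_of_nonneg (sum_nonneg fun i _ => (h01 i).1)]
  simpa using sum_le_sum fun i (_ : i ∈ s) => (h01 i).2

theorem measurable_of_sum_indicator [MeasurableSpace Ω] (hA : ∀ i ∈ s, MeasurableSet (A i)) :
    Measurable ξ := by
  rw [funext hξ]
  exact Finset.measurable_sum _ fun i hi => measurable_const.indicator (hA i hi)

theorem memLp_of_sum_indicator [MeasurableSpace Ω] {μ : Measure Ω} [IsFiniteMeasure μ]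
    (hA : ∀ i ∈ s, MeasurableSet (A i)) (p : ENNReal) : MemLp ξ p μ :=
  MemLp.of_bound (measurable_of_sum_indicator hξ hA).aestronglyMeasurable #s
    (ae_of_all _ (abs_le_card_of_sum_indicator hξ))

theorem sum_indicator_inv_eq_indicator_biUnion (ω : Ω) :
    ∑ i ∈ s, (A i).indicator (fun ω => (ξ ω)⁻¹) ω
      = (⋃ i ∈ s, A i).indicator (fun _ => (1 : ℝ)) ω := by
  have hmul : ∀ i, (A i).indicator (fun ω => (ξ ω)⁻¹) ω
      = (A i).indicator (fun _ => (1 : ℝ)) ω * (ξ ω)⁻¹ := fun i => by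
    simpa using Set.indicator_mul_left (A i) (fun _ => (1 : ℝ)) (fun ω => (ξ ω)⁻¹)
  rw [sum_congr rfl fun i _ => hmul i, ← sum_mul, ← hξ]
  by_cases hω : ω ∈ ⋃ i ∈ s, A i
  · obtain ⟨i, hi, hωi⟩ := Set.mem_iUnion₂.1 hω
    rw [Set.indicator_of_mem hω,
      mul_inv_cancel₀ (one_pos.trans_le (one_le_of_mem_of_sum_indicator hξ hi hωi)).ne']
  · have hξω : ξ ω = 0 := by
      rw [hξ]
      exact sum_eq_zero fun i hi =>
        Set.indicator_of_notMem (fun hωi => hω (Set.mem_biUnion hi hωi)) _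
    rw [Set.indicator_of_notMem hω, hξω, zero_mul]

theorem measureReal_biUnion_eq_sum_setIntegral_inv [MeasurableSpace Ω] {μ : Measure Ω}
    [IsFiniteMeasure μ] (hA : ∀ i ∈ s, MeasurableSet (A i)) :
    μ.real (⋃ i ∈ s, A i) = ∑ i ∈ s, ∫ ω in A i, (ξ ω)⁻¹ ∂μ := by
  have hint : ∀ i ∈ s, IntegrableOn (fun ω => (ξ ω)⁻¹) (A i) μ := fun i hi =>
    integrable_inv_of_one_le (measurable_of_sum_indicator hξ hA).aemeasurable
      (ae_restrict_of_forall_mem (hA i hi) fun _ => one_le_of_mem_of_sum_indicator hξ hi)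
  calc μ.real (⋃ i ∈ s, A i)
      = ∫ ω, (⋃ i ∈ s, A i).indicator (fun _ => (1 : ℝ)) ω ∂μ :=
        (integral_indicator_one (Finset.measurableSet_biUnion s hA)).symm
    _ = ∫ ω, ∑ i ∈ s, (A i).indicator (fun ω => (ξ ω)⁻¹) ω ∂μ :=
        integral_congr_ae <| ae_of_all _ fun ω =>
          (sum_indicator_inv_eq_indicator_biUnion hξ ω).symm
    _ = ∑ i ∈ s, ∫ ω, (A i).indicator (fun ω => (ξ ω)⁻¹) ω ∂μ :=
        integral_finsetSum _ fun i hi => (hint i hi).integrable_indicator (hA i hi)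
    _ = ∑ i ∈ s, ∫ ω in A i, (ξ ω)⁻¹ ∂μ :=
        sum_congr rfl fun i hi => integral_indicator (hA i hi)

end CountingFunction

theorem frolov_cor11 (Ω : Type*) [MeasurableSpace Ω]
    (P : Measure Ω) [IsProbabilityMeasure P]
    (N : ℕ) (A : ℕ → Set Ω) (hA : ∀ k, MeasurableSet (A k))
    (ξ : Ω → ℝ)
    (hξ : ∀ ω, ξ ω = ∑ i ∈ Finset.Icc 1 N, Set.indicator (A i) (fun _ => (1 : ℝ)) ω) :
    (P (⋃ k ∈ Finset.Icc 1 N, A k)).toReal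
      ≤ ∑ k ∈ Finset.Icc 1 N,
          ((P (A k)).toReal
            - (∫ ω, (ξ ω - 1) * Set.indicator (A k) (fun _ => (1 : ℝ)) ω ∂P) ^ 2
              / ∫ ω, ξ ω * (ξ ω - 1) * Set.indicator (A k) (fun _ => (1 : ℝ)) ω ∂P) := by
  rw [← measureReal_def, measureReal_biUnion_eq_sum_setIntegral_inv hξ fun k _ => hA k]
  refine sum_le_sum fun k hk => ?_
  have hξLp (p : ENNReal) : MemLp ξ p (P.restrict (A k)) :=
    memLp_of_sum_indicator hξ (fun k _ => hA k) p
  rw [integral_mul_indicator_one (hA k), integral_mul_indicator_one (hA k), ← measureReal_def,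
    ← measureReal_restrict_apply_univ]
  exact integral_inv_le_measureReal_sub_of_one_le (memLp_one_iff_integrable.1 (hξLp 1))
    (hξLp 2).integrable_sq
    (ae_restrict_of_forall_mem (hA k) fun _ => one_le_of_mem_of_sum_indicator hξ hk)
end
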